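/- arXiv:2206.07879 — 4 statements merged into one kernel-verified Lean document; each statement's English description precedes it below -/
import Mathlib

section
/- Let T be a nonzero nonnegative tensor of order d with dimensions n_1, …, n_d satisfying ‖T‖_σ/‖T‖ = α. Then for every positive integer m there exists a nonzero nonnegative tensor T_m of order d with dimensions n_1^m, …, n_d^m satisfying ‖T_m‖_σ/‖T_m‖ = α^m. Moreover, if all dimensions of T are equal and T is symmetric, then T_m can be chosen symmetric. -/
set_option maxHeartbeats 1000000

noncomputable section

/-- Frobenius norm of a real tensor of order `d` with dimensions `n 0, …, n (d-1)`. -/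
def frobNorm {d : ℕ} {n : Fin d → ℕ} (T : (∀ k, Fin (n k)) → ℝ) : ℝ :=
  Real.sqrt (∑ i, (T i) ^ 2)

/-- Spectral norm: supremum of `|⟨T, x¹⊗⋯⊗x^d⟩|` over tuples of unit vectors. -/
def specNorm {d : ℕ} {n : Fin d → ℕ} (T : (∀ k, Fin (n k)) → ℝ) : ℝ :=
  sSup { r : ℝ | ∃ x : ∀ k, EuclideanSpace ℝ (Fin (n k)),
    (∀ k, ‖x k‖ = 1) ∧ r = |∑ i, T i * ∏ k, x k (i k)| }

namespace TensorAux

variable {d : ℕ}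

/-- Pairing of a tensor with a tuple of vectors. -/
def gPair {ι : Fin d → Type*} [∀ k, Fintype (ι k)] (T : (∀ k, ι k) → ℝ)
    (x : ∀ k, ι k → ℝ) : ℝ :=
  ∑ i, T i * ∏ k, x k (i k)

/-- The set of values `|⟨T, ⊗x⟩|` over unit tuples. -/
def gSet {ι : Fin d → Type*} [∀ k, Fintype (ι k)] (T : (∀ k, ι k) → ℝ) : Set ℝ :=
  { r | ∃ x : ∀ k, ι k → ℝ, (∀ k, ∑ j, (x k j) ^ 2 = 1) ∧ r = |gPair T x| }

def gSpec {ι : Fin d → Type*} [∀ k, Fintype (ι k)] (T : (∀ k, ι k) → ℝ) : ℝ :=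
  sSup (gSet T)

def gFrob {ι : Fin d → Type*} [∀ k, Fintype (ι k)] (T : (∀ k, ι k) → ℝ) : ℝ :=
  Real.sqrt (∑ i, T i ^ 2)

variable {ι : Fin d → Type*} [∀ k, Fintype (ι k)]

theorem gFrob_nonneg (T : (∀ k, ι k) → ℝ) : 0 ≤ gFrob T := Real.sqrt_nonneg _

theorem mem_gSet_le (T : (∀ k, ι k) → ℝ) {r : ℝ} (hr : r ∈ gSet T) : r ≤ gFrob T := by
  obtain ⟨x, hx, rfl⟩ := hr
  have key : (gPair T x) ^ 2 ≤ (∑ i, T i ^ 2) * ∑ i : ∀ k, ι k, (∏ k, x k (i k)) ^ 2 :=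
    Finset.sum_mul_sq_le_sq_mul_sq Finset.univ T (fun i : ∀ k, ι k => ∏ k, x k (i k))
  have hsq : ∑ i : ∀ k, ι k, (∏ k, x k (i k)) ^ 2 = 1 := by
    have h2 : ∏ k, ∑ j, (x k j) ^ 2 = ∑ i : ∀ k, ι k, ∏ k, (x k (i k)) ^ 2 := by
      rw [Finset.prod_univ_sum, Fintype.piFinset_univ]
    calc ∑ i : ∀ k, ι k, (∏ k, x k (i k)) ^ 2
        = ∑ i : ∀ k, ι k, ∏ k, (x k (i k)) ^ 2 :=
          Finset.sum_congr rfl fun i _ => (Finset.prod_pow _ _ _).symm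
      _ = ∏ k, ∑ j, (x k j) ^ 2 := h2.symm
      _ = 1 := by rw [Finset.prod_congr rfl fun k _ => hx k, Finset.prod_const_one]
  rw [hsq, mul_one] at key
  calc |gPair T x| = Real.sqrt ((gPair T x) ^ 2) := (Real.sqrt_sq_eq_abs _).symm
    _ ≤ gFrob T := Real.sqrt_le_sqrt key

theorem mem_gSet_nonneg (T : (∀ k, ι k) → ℝ) {r : ℝ} (hr : r ∈ gSet T) : 0 ≤ r := by
  obtain ⟨x, _, rfl⟩ := hr; exact abs_nonneg _

theorem bddAbove_gSet (T : (∀ k, ι k) → ℝ) : BddAbove (gSet T) :=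
  ⟨gFrob T, fun _ hr => mem_gSet_le T hr⟩

theorem gSet_nonempty [∀ k, Nonempty (ι k)] (T : (∀ k, ι k) → ℝ) : (gSet T).Nonempty := by
  classical
  set x : ∀ k, ι k → ℝ := fun k j => if j = Classical.arbitrary (ι k) then 1 else 0 with hxdef
  refine ⟨|gPair T x|, x, fun k => ?_, rfl⟩
  have : ∀ j : ι k, (x k j) ^ 2 = if j = Classical.arbitrary (ι k) then 1 else 0 := by
    intro j; simp only [hxdef]; split <;> norm_num
  rw [Finset.sum_congr rfl fun j _ => this j, Finset.sum_ite_eq']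
  simp

theorem le_gSpec (T : (∀ k, ι k) → ℝ) {r : ℝ} (hr : r ∈ gSet T) : r ≤ gSpec T :=
  le_csSup (bddAbove_gSet T) hr

theorem gSpec_nonneg [∀ k, Nonempty (ι k)] (T : (∀ k, ι k) → ℝ) : 0 ≤ gSpec T := by
  obtain ⟨r, hr⟩ := gSet_nonempty T
  exact le_trans (mem_gSet_nonneg T hr) (le_gSpec T hr)

theorem gSpec_le [∀ k, Nonempty (ι k)] (T : (∀ k, ι k) → ℝ) {c : ℝ}
    (h : ∀ r ∈ gSet T, r ≤ c) : gSpec T ≤ c :=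
  csSup_le (gSet_nonempty T) h

/-! ### Reindexing -/

def reindex {ι κ : Fin d → Type*} [∀ k, Fintype (ι k)] [∀ k, Fintype (κ k)]
    (e : ∀ k, ι k ≃ κ k) (T : (∀ k, ι k) → ℝ) : (∀ k, κ k) → ℝ :=
  fun j => T fun k => (e k).symm (j k)

variable {κ : Fin d → Type*} [∀ k, Fintype (κ k)]

theorem gFrob_reindex (e : ∀ k, ι k ≃ κ k) (T : (∀ k, ι k) → ℝ) :
    gFrob (reindex e T) = gFrob T := by
  unfold gFrob
  congr 1
  exact (Fintype.sum_equiv (Equiv.piCongrRight e) _ _ (fun i => by simp [reindex])).symm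

theorem gSet_reindex_subset (e : ∀ k, ι k ≃ κ k) (T : (∀ k, ι k) → ℝ) :
    gSet T ⊆ gSet (reindex e T) := by
  rintro r ⟨y, hy, rfl⟩
  refine ⟨fun k c => y k ((e k).symm c), fun k => ?_, ?_⟩
  · rw [← hy k]
    exact (Fintype.sum_equiv (e k) _ _ (fun a => by simp)).symm
  · congr 1
    unfold gPair reindex
    exact Fintype.sum_equiv (Equiv.piCongrRight e) _ _ (fun i => by simp)

theorem gSet_reindex (e : ∀ k, ι k ≃ κ k) (T : (∀ k, ι k) → ℝ) :
    gSet (reindex e T) = gSet T := by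
  refine le_antisymm ?_ (gSet_reindex_subset e T)
  have h1 : reindex (fun k => (e k).symm) (reindex e T) = T := by
    funext i; simp [reindex]
  have := gSet_reindex_subset (fun k => (e k).symm) (reindex e T)
  rwa [h1] at this

theorem gSpec_reindex (e : ∀ k, ι k ≃ κ k) (T : (∀ k, ι k) → ℝ) :
    gSpec (reindex e T) = gSpec T := by
  unfold gSpec; rw [gSet_reindex]

/-! ### Kronecker product -/

def kron (T : (∀ k, ι k) → ℝ) (S : (∀ k, κ k) → ℝ) : (∀ k, ι k × κ k) → ℝ :=
  fun i => T (fun k => (i k).1) * S (fun k => (i k).2)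

def pairEquiv (ι κ : Fin d → Type*) : (∀ k, ι k × κ k) ≃ (∀ k, ι k) × (∀ k, κ k) where
  toFun f := ⟨fun k => (f k).1, fun k => (f k).2⟩
  invFun p := fun k => (p.1 k, p.2 k)
  left_inv f := rfl
  right_inv p := rfl

theorem gFrob_kron (T : (∀ k, ι k) → ℝ) (S : (∀ k, κ k) → ℝ) :
    gFrob (kron T S) = gFrob T * gFrob S := by
  unfold gFrob
  rw [← Real.sqrt_mul (Finset.sum_nonneg fun i _ => sq_nonneg _)]
  congr 1
  have h1 : ∑ i : ∀ k, ι k × κ k, kron T S i ^ 2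
      = ∑ p : (∀ k, ι k) × (∀ k, κ k), (T p.1 * S p.2) ^ 2 :=
    Fintype.sum_equiv (pairEquiv ι κ) _ _ (fun i => rfl)
  rw [h1, Fintype.sum_prod_type, Finset.sum_mul_sum]
  exact Finset.sum_congr rfl fun a _ => Finset.sum_congr rfl fun b _ => by ring

theorem sum_sq_prod (x : ∀ k, ι k → ℝ) (y : ∀ k, κ k → ℝ) :
    ∑ p : ∀ k, ι k × κ k, (∏ k, x k (p k).1 * y k (p k).2) ^ 2
      = (∏ k, ∑ a, (x k a) ^ 2) * ∏ k, ∑ b, (y k b) ^ 2 := by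
  have h2 : ∏ k, ∑ c : ι k × κ k, (x k c.1) ^ 2 * (y k c.2) ^ 2
      = ∑ p : ∀ k, ι k × κ k, ∏ k, (x k (p k).1) ^ 2 * (y k (p k).2) ^ 2 := by
    rw [Finset.prod_univ_sum, Fintype.piFinset_univ]
  have h3 : ∑ p : ∀ k, ι k × κ k, (∏ k, x k (p k).1 * y k (p k).2) ^ 2
      = ∑ p : ∀ k, ι k × κ k, ∏ k, (x k (p k).1) ^ 2 * (y k (p k).2) ^ 2 := by
    refine Finset.sum_congr rfl fun p _ => ?_
    rw [← Finset.prod_pow]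
    exact Finset.prod_congr rfl fun k _ => by ring
  rw [h3, ← h2, ← Finset.prod_mul_distrib]
  refine Finset.prod_congr rfl fun k _ => ?_
  rw [Fintype.sum_prod_type, Finset.sum_mul_sum]

theorem gPair_kron (T : (∀ k, ι k) → ℝ) (S : (∀ k, κ k) → ℝ)
    (x : ∀ k, ι k → ℝ) (y : ∀ k, κ k → ℝ) :
    gPair (kron T S) (fun k p => x k p.1 * y k p.2) = gPair T x * gPair S y := by
  unfold gPair
  have h1 : ∑ i : ∀ k, ι k × κ k, kron T S i * ∏ k, x k (i k).1 * y k (i k).2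
      = ∑ p : (∀ k, ι k) × (∀ k, κ k), (T p.1 * S p.2) * ∏ k, x k (p.1 k) * y k (p.2 k) :=
    Fintype.sum_equiv (pairEquiv ι κ) _ _ (fun i => rfl)
  rw [h1, Fintype.sum_prod_type, Finset.sum_mul_sum]
  refine Finset.sum_congr rfl fun a _ => Finset.sum_congr rfl fun b _ => ?_
  rw [Finset.prod_mul_distrib]; ring

theorem sSup_mul_sSup_le {A B : Set ℝ} (hA : A.Nonempty) (hB : B.Nonempty)
    (hA0 : ∀ a ∈ A, 0 ≤ a) (hB0 : ∀ b ∈ B, 0 ≤ b) (hbB : BddAbove B) {C : ℝ} (hC : 0 ≤ C)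
    (h : ∀ a ∈ A, ∀ b ∈ B, a * b ≤ C) : sSup A * sSup B ≤ C := by
  obtain ⟨b0, hb0⟩ := hB
  have hBs : 0 ≤ sSup B := le_trans (hB0 b0 hb0) (le_csSup hbB hb0)
  rcases eq_or_lt_of_le hBs with hzero | hpos
  · rw [← hzero, mul_zero]; exact hC
  · rw [← le_div_iff₀ hpos]
    refine csSup_le hA fun a ha => ?_
    rw [le_div_iff₀ hpos]
    rcases eq_or_lt_of_le (hA0 a ha) with hza | hpa
    · rw [← hza, zero_mul]; exact hC
    · have hb : sSup B ≤ C / a := csSup_le ⟨b0, hb0⟩ fun b hb => by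
        rw [le_div_iff₀' hpa]; exact h a ha b hb
      calc a * sSup B ≤ a * (C / a) := by
            exact mul_le_mul_of_nonneg_left hb (le_of_lt hpa)
        _ = C := by field_simp

theorem gSpec_mul_le_kron [∀ k, Nonempty (ι k)] [∀ k, Nonempty (κ k)]
    (T : (∀ k, ι k) → ℝ) (S : (∀ k, κ k) → ℝ) :
    gSpec T * gSpec S ≤ gSpec (kron T S) := by
  refine sSup_mul_sSup_le (gSet_nonempty T) (gSet_nonempty S)
    (fun a ha => mem_gSet_nonneg T ha) (fun b hb => mem_gSet_nonneg S hb)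
    (bddAbove_gSet S) (gSpec_nonneg _) ?_
  rintro a ⟨x, hx, rfl⟩ b ⟨y, hy, rfl⟩
  refine le_gSpec _ ⟨fun k p => x k p.1 * y k p.2, fun k => ?_, ?_⟩
  · rw [Fintype.sum_prod_type]
    have : ∀ c : ι k, ∑ b : κ k, (x k c * y k b) ^ 2 = (x k c) ^ 2 * ∑ b, (y k b) ^ 2 := by
      intro c; rw [Finset.mul_sum]; exact Finset.sum_congr rfl fun b _ => by ring
    rw [Finset.sum_congr rfl fun c _ => this c]
    simp only [hy k, mul_one, hx k]
  · rw [gPair_kron, abs_mul]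

theorem gSpec_kron_le [∀ k, Nonempty (ι k)] [∀ k, Nonempty (κ k)]
    (T : (∀ k, ι k) → ℝ) (S : (∀ k, κ k) → ℝ) (hS : ∀ b, 0 ≤ S b) :
    gSpec (kron T S) ≤ gSpec T * gSpec S := by
  refine gSpec_le _ ?_
  rintro r ⟨z, hz, rfl⟩
  -- column norms
  set u : ∀ k, κ k → ℝ := fun k c => Real.sqrt (∑ a, z k (a, c) ^ 2) with hu_def
  have hu_nonneg : ∀ k c, 0 ≤ u k c := fun k c => Real.sqrt_nonneg _
  have hu_sq : ∀ k c, (u k c) ^ 2 = ∑ a, z k (a, c) ^ 2 := fun k c =>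
    Real.sq_sqrt (Finset.sum_nonneg fun a _ => sq_nonneg _)
  have hu2 : ∀ k, ∑ c, (u k c) ^ 2 = 1 := by
    intro k
    rw [Finset.sum_congr rfl fun c _ => hu_sq k c,
      ← Fintype.sum_prod_type_right (f := fun p : ι k × κ k => z k p ^ 2)]
    exact hz k
  -- partial pairings
  set g : (∀ k, κ k) → ℝ := fun b => gPair T (fun k a => z k (a, b k)) with hg_def
  have hg : ∀ b : ∀ k, κ k, |g b| ≤ gSpec T * ∏ k, u k (b k) := by
    intro b
    by_cases hzero : ∃ k, u k (b k) = 0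
    · obtain ⟨k0, hk0⟩ := hzero
      have hzz : ∀ a : ι k0, z k0 (a, b k0) = 0 := by
        intro a
        have hsum : ∑ a, z k0 (a, b k0) ^ 2 = 0 := by rw [← hu_sq k0 (b k0), hk0]; ring
        have := (Finset.sum_eq_zero_iff_of_nonneg (fun a _ => sq_nonneg _)).1 hsum a
          (Finset.mem_univ a)
        exact pow_eq_zero_iff (n := 2) (by norm_num) |>.1 this
      have hg0 : g b = 0 := by
        simp only [hg_def, gPair]
        refine Finset.sum_eq_zero fun i _ => ?_
        rw [Finset.prod_eq_zero (Finset.mem_univ k0) (hzz (i k0)), mul_zero]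
      rw [hg0, abs_zero]
      exact mul_nonneg (gSpec_nonneg T)
        (Finset.prod_nonneg fun k _ => hu_nonneg k (b k))
    · push_neg at hzero
      have hupos : ∀ k, 0 < u k (b k) := fun k =>
        lt_of_le_of_ne (hu_nonneg k (b k)) (Ne.symm (hzero k))
      have hprodpos : 0 < ∏ k, u k (b k) := Finset.prod_pos fun k _ => hupos k
      set y : ∀ k, ι k → ℝ := fun k a => z k (a, b k) / u k (b k) with hy_def
      have hymem : |gPair T y| ∈ gSet T := by
        refine ⟨y, fun k => ?_, rfl⟩
        have : ∀ a : ι k, (y k a) ^ 2 = z k (a, b k) ^ 2 / (u k (b k)) ^ 2 := by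
          intro a; rw [hy_def]; ring
        rw [Finset.sum_congr rfl fun a _ => this a, ← Finset.sum_div, ← hu_sq k (b k),
          div_self (pow_ne_zero 2 (hzero k))]
      have hpair : gPair T y = g b / ∏ k, u k (b k) := by
        simp only [hg_def, gPair, hy_def, Finset.prod_div_distrib, Finset.prod_const]
        rw [Finset.sum_div]
        exact Finset.sum_congr rfl fun i _ => by ring
      have hle : |gPair T y| ≤ gSpec T := le_gSpec T hymem
      rw [hpair, abs_div, abs_of_pos hprodpos, div_le_iff₀ hprodpos] at hle
      exact hle
  -- main chain
  have hmain : gPair (kron T S) z = ∑ b : ∀ k, κ k, S b * g b := by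
    have h1 : gPair (kron T S) z
        = ∑ p : (∀ k, ι k) × (∀ k, κ k), (T p.1 * S p.2) * ∏ k, z k (p.1 k, p.2 k) :=
      Fintype.sum_equiv (pairEquiv ι κ) _ _ (fun i => rfl)
    rw [h1, Fintype.sum_prod_type_right]
    refine Finset.sum_congr rfl fun b _ => ?_
    rw [hg_def]
    simp only [gPair]
    rw [Finset.mul_sum]
    exact Finset.sum_congr rfl fun a _ => by ring
  rw [hmain]
  calc |∑ b : ∀ k, κ k, S b * g b| ≤ ∑ b : ∀ k, κ k, |S b * g b| :=
        Finset.abs_sum_le_sum_abs _ _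
    _ = ∑ b : ∀ k, κ k, S b * |g b| := by
        refine Finset.sum_congr rfl fun b _ => ?_
        rw [abs_mul, abs_of_nonneg (hS b)]
    _ ≤ ∑ b : ∀ k, κ k, S b * (gSpec T * ∏ k, u k (b k)) :=
        Finset.sum_le_sum fun b _ => mul_le_mul_of_nonneg_left (hg b) (hS b)
    _ = gSpec T * gPair S u := by
        rw [gPair, Finset.mul_sum]
        exact Finset.sum_congr rfl fun b _ => by ring
    _ ≤ gSpec T * gSpec S := by
        refine mul_le_mul_of_nonneg_left ?_ (gSpec_nonneg T)
        have hmem : |gPair S u| ∈ gSet S := ⟨u, hu2, rfl⟩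
        have hpos : 0 ≤ gPair S u := Finset.sum_nonneg fun b _ =>
          mul_nonneg (hS b) (Finset.prod_nonneg fun k _ => hu_nonneg k (b k))
        calc gPair S u = |gPair S u| := (abs_of_nonneg hpos).symm
          _ ≤ gSpec S := le_gSpec S hmem

theorem gSpec_kron [∀ k, Nonempty (ι k)] [∀ k, Nonempty (κ k)]
    (T : (∀ k, ι k) → ℝ) (S : (∀ k, κ k) → ℝ) (hS : ∀ b, 0 ≤ S b) :
    gSpec (kron T S) = gSpec T * gSpec S :=
  le_antisymm (gSpec_kron_le T S hS) (gSpec_mul_le_kron T S)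

/-! ### Powers -/

def gpow (T : (∀ k, ι k) → ℝ) (m : ℕ) : (∀ k, Fin m → ι k) → ℝ :=
  fun i => ∏ j, T (fun k => i k j)

theorem gpow_nonneg (T : (∀ k, ι k) → ℝ) (hT : ∀ i, 0 ≤ T i) (m : ℕ) :
    ∀ i, 0 ≤ gpow T m i := fun i => Finset.prod_nonneg fun j _ => hT _

theorem gpow_one (T : (∀ k, ι k) → ℝ) :
    gpow T 1 = reindex (fun k => (Equiv.funUnique (Fin 1) (ι k)).symm) T := by
  funext j
  simp [gpow, reindex, Fin.prod_univ_one]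

theorem gpow_succ (T : (∀ k, ι k) → ℝ) (m : ℕ) :
    gpow T (m + 1)
      = reindex (fun k => Fin.consEquiv (fun _ : Fin (m + 1) => ι k))
          (kron T (gpow T m)) := by
  funext j
  simp only [gpow, reindex, kron, Fin.consEquiv, Equiv.coe_fn_symm_mk]
  rw [Fin.prod_univ_succ]
  simp [Fin.tail]

theorem gpow_norms (T : (∀ k, ι k) → ℝ) (hT : ∀ i, 0 ≤ T i) [∀ k, Nonempty (ι k)] :
    ∀ m : ℕ, 1 ≤ m → gFrob (gpow T m) = gFrob T ^ m ∧ gSpec (gpow T m) = gSpec T ^ m := by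
  refine Nat.le_induction ?_ ?_
  · rw [gpow_one, gFrob_reindex, gSpec_reindex, pow_one, pow_one]
    exact ⟨rfl, rfl⟩
  · intro m _ ih
    rw [gpow_succ, gFrob_reindex, gSpec_reindex, gFrob_kron,
      gSpec_kron T (gpow T m) (gpow_nonneg T hT m), ih.1, ih.2,
      pow_succ, pow_succ]
    exact ⟨mul_comm _ _, mul_comm _ _⟩

/-! ### Bridge to `specNorm`/`frobNorm` -/

theorem euclidean_norm_one_iff {N : ℕ} (x : EuclideanSpace ℝ (Fin N)) :
    ‖x‖ = 1 ↔ ∑ j, x j ^ 2 = 1 := by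
  rw [EuclideanSpace.norm_eq, Real.sqrt_eq_one]
  simp [Real.norm_eq_abs, sq_abs]

theorem specNorm_eq_gSpec {n : Fin d → ℕ} (T : (∀ k, Fin (n k)) → ℝ) :
    specNorm T = gSpec T := by
  unfold specNorm gSpec
  congr 1
  ext r
  constructor
  · rintro ⟨x, h1, rfl⟩
    exact ⟨fun k => x k, fun k => (euclidean_norm_one_iff (x k)).1 (h1 k), rfl⟩
  · rintro ⟨x, h1, rfl⟩
    exact ⟨fun k => WithLp.toLp 2 (x k), fun k => (euclidean_norm_one_iff (WithLp.toLp 2 (x k))).2 (h1 k), rfl⟩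

theorem frobNorm_eq_gFrob {n : Fin d → ℕ} (T : (∀ k, Fin (n k)) → ℝ) :
    frobNorm T = gFrob T := rfl

/-- The `m`-th Kronecker power of a tensor, indexed by `Fin (n k ^ m)`. -/
def TmPow {n : Fin d → ℕ} (m : ℕ) (T : (∀ k, Fin (n k)) → ℝ) :
    (∀ k, Fin (n k ^ m)) → ℝ :=
  fun i => ∏ j : Fin m, T (fun k => finFunctionFinEquiv.symm (i k) j)

theorem TmPow_eq_reindex {n : Fin d → ℕ} (m : ℕ) (T : (∀ k, Fin (n k)) → ℝ) :
    TmPow m T = reindex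
      (fun k => (finFunctionFinEquiv : (Fin m → Fin (n k)) ≃ Fin (n k ^ m)))
      (gpow T m) := rfl

theorem key (m : ℕ) (hm : 0 < m) {n : Fin d → ℕ} (T : (∀ k, Fin (n k)) → ℝ) (α : ℝ)
    (hT : T ≠ 0) (hpos : ∀ i, 0 ≤ T i) (hα : specNorm T / frobNorm T = α) :
    TmPow m T ≠ 0 ∧ (∀ i, 0 ≤ TmPow m T i) ∧
      specNorm (TmPow m T) / frobNorm (TmPow m T) = α ^ m := by
  have hne : ∀ k, Nonempty (Fin (n k)) := by
    intro k
    by_contra h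
    apply hT
    funext i
    exact absurd ⟨i k⟩ h
  haveI := hne
  obtain ⟨i0, hi0⟩ := Function.ne_iff.1 hT
  have hi0' : T i0 ≠ 0 := hi0
  refine ⟨?_, fun i => Finset.prod_nonneg fun j _ => hpos _, ?_⟩
  · refine Function.ne_iff.2 ⟨fun k => finFunctionFinEquiv (fun _ => i0 k), ?_⟩
    have : TmPow m T (fun k => finFunctionFinEquiv (fun _ => i0 k)) = T i0 ^ m := by
      unfold TmPow
      simp only [Equiv.symm_apply_apply]
      rw [Finset.prod_const, Finset.card_univ, Fintype.card_fin]
    rw [this]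
    exact pow_ne_zero m hi0'
  · have hnorms := gpow_norms T hpos m hm
    rw [TmPow_eq_reindex, specNorm_eq_gSpec, frobNorm_eq_gFrob,
      gSpec_reindex, gFrob_reindex, hnorms.1, hnorms.2, ← div_pow, ← hα,
      specNorm_eq_gSpec, frobNorm_eq_gFrob]

end TensorAux

theorem stmt_14 {d : ℕ} (m : ℕ) (hm : 0 < m) :
    (∀ (n : Fin d → ℕ) (T : (∀ k, Fin (n k)) → ℝ) (α : ℝ),
      T ≠ 0 → (∀ i, 0 ≤ T i) → specNorm T / frobNorm T = α →
      ∃ Tm : (∀ k, Fin (n k ^ m)) → ℝ,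
        Tm ≠ 0 ∧ (∀ i, 0 ≤ Tm i) ∧ specNorm Tm / frobNorm Tm = α ^ m) ∧
    (∀ (nn : ℕ) (T : (Fin d → Fin nn) → ℝ) (α : ℝ),
      T ≠ 0 → (∀ i, 0 ≤ T i) →
      (∀ (π : Equiv.Perm (Fin d)) (i : Fin d → Fin nn), T (i ∘ π) = T i) →
      specNorm (n := fun _ : Fin d => nn) T / frobNorm T = α →
      ∃ Tm : (Fin d → Fin (nn ^ m)) → ℝ,
        Tm ≠ 0 ∧ (∀ i, 0 ≤ Tm i) ∧
        (∀ (π : Equiv.Perm (Fin d)) (i : Fin d → Fin (nn ^ m)), Tm (i ∘ π) = Tm i) ∧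
        specNorm (n := fun _ : Fin d => nn ^ m) Tm / frobNorm Tm = α ^ m) := by
  constructor
  · intro n T α hT hpos hα
    obtain ⟨h1, h2, h3⟩ := TensorAux.key m hm T α hT hpos hα
    exact ⟨TensorAux.TmPow m T, h1, h2, h3⟩
  · intro nn T α hT hpos hsym hα
    obtain ⟨h1, h2, h3⟩ := TensorAux.key m hm (n := fun _ : Fin d => nn) T α hT hpos hα
    refine ⟨TensorAux.TmPow (n := fun _ : Fin d => nn) m T, h1, h2, ?_, h3⟩
    intro π i
    unfold TensorAux.TmPow
    exact Finset.prod_congr rfl fun j _ =>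
      hsym π (fun k => finFunctionFinEquiv.symm (i k) j)

end
end

section
/- Let d ≥ 1 and n_1, …, n_d ≥ 2 be integers with max_{1≤k≤d} n_k ≤ √(∏_{k=1}^d n_k). Then φ_+(n_1, …, n_d) ≤ 2^{(d+1)/4} · (∏_{k=1}^d n_k)^{-1/4}; that is, there exists a nonzero nonnegative tensor T of order d with dimensions n_1, …, n_d such that ‖T‖_σ ≤ 2^{(d+1)/4} · (∏_{k=1}^d n_k)^{-1/4} · ‖T‖. -/
noncomputable section

/-- `φ(n_1,…,n_d)`: infimum of `‖T‖_σ/‖T‖` over nonzero real tensors. -/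
def phi {d : ℕ} (n : Fin d → ℕ) : ℝ :=
  sInf { r : ℝ | ∃ T : (∀ k, Fin (n k)) → ℝ, T ≠ 0 ∧ r = specNorm T / frobNorm T }

/-- `φ_+(n_1,…,n_d)`: infimum of `‖T‖_σ/‖T‖` over nonzero nonnegative tensors. -/
def phiPos {d : ℕ} (n : Fin d → ℕ) : ℝ :=
  sInf { r : ℝ | ∃ T : (∀ k, Fin (n k)) → ℝ,
    T ≠ 0 ∧ (∀ i, 0 ≤ T i) ∧ r = specNorm T / frobNorm T }

open Finset

/-! ### Auxiliary arithmetic lemmas -/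

lemma nat_twice_div {s m : ℕ} (h1 : 1 ≤ s) (h2 : s ≤ m) : m ≤ 2 * (s * (m / s)) := by
  have hd : 1 ≤ m / s := (Nat.one_le_div_iff h1).2 h2
  have hmod := Nat.div_add_mod m s
  have hlt : m % s < s := Nat.mod_lt _ h1
  nlinarith [Nat.le_mul_of_pos_right s hd]

lemma nat_sqrt_quad {q : ℕ} (h : 1 ≤ q) : q + 1 ≤ 4 * (Nat.sqrt q)^2 := by
  have h1 : 1 ≤ Nat.sqrt q := by
    rw [Nat.one_le_iff_ne_zero, ← Nat.pos_iff_ne_zero, Nat.sqrt_pos]; exact h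
  have h2 := Nat.lt_succ_sqrt' q
  have : q + 1 ≤ (Nat.sqrt q + 1)^2 := by simpa [Nat.succ_eq_add_one] using h2
  nlinarith

lemma triple_sorted {m1 m2 m3 : ℕ} (h1 : 1 ≤ m1) (h12 : m1 ≤ m2) (h23 : m2 ≤ m3)
    (htri : m3 ≤ m1 * m2) :
    ∃ v1 v2 v3 : ℕ, 1 ≤ v1 ∧ 1 ≤ v2 ∧ 1 ≤ v3 ∧
      v1 * v2 ≤ m1 ∧ v2 * v3 ≤ m2 ∧ v3 * v1 ≤ m3 ∧
      m1 * m2 * m3 ≤ 16 * (v1 * v2 * v3)^2 ∧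
      (m1 = 1 → m1 * m2 * m3 ≤ (v1 * v2 * v3)^2) := by
  have h2 : 1 ≤ m2 := le_trans h1 h12
  have h3 : 1 ≤ m3 := le_trans h2 h23
  set q := m1 * m3 / m2 with hqdef
  clear_value q
  have hq1 : 1 ≤ q := hqdef ▸ (Nat.one_le_div_iff h2).2 (by nlinarith)
  have hqle : q * m2 ≤ m1 * m3 := hqdef ▸ Nat.div_mul_le_self _ _
  have hqgt : m1 * m3 < m2 * (q + 1) := by
    have h : m2 * q + (m1 * m3) % m2 = m1 * m3 := by rw [hqdef]; exact Nat.div_add_mod _ _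
    have h' : (m1 * m3) % m2 < m2 := Nat.mod_lt _ (by omega)
    have h2' : m2 * (q + 1) = m2 * q + m2 := by ring
    omega
  set v1 := Nat.sqrt q with hv1def
  have hv1pos : 1 ≤ v1 := by
    rw [hv1def, Nat.one_le_iff_ne_zero, ← Nat.pos_iff_ne_zero, Nat.sqrt_pos]; exact hq1
  have hv1sq : v1 ^ 2 ≤ q := hv1def ▸ Nat.sqrt_le' q
  have hv1q : q + 1 ≤ 4 * v1^2 := hv1def ▸ nat_sqrt_quad hq1
  have hv1one : q = 1 → v1 = 1 := fun h => by rw [hv1def, h]; rfl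
  clear_value v1
  clear hv1def
  have hqm1 : q ≤ m1 * m1 := by
    have h : m1 * m3 ≤ (m1 * m1) * m2 := by nlinarith
    nlinarith
  have hqm3 : q ≤ m3 * m3 := by
    have h : m1 * m3 ≤ (m3 * m3) * m2 := by nlinarith
    nlinarith
  have hv1m1 : v1 ≤ m1 := by nlinarith
  have hv1m3 : v1 ≤ m3 := by nlinarith
  set v2 := m1 / v1 with hv2def
  have hv2pos : 1 ≤ v2 := (Nat.one_le_div_iff hv1pos).2 hv1m1
  have hv2m2 : v2 ≤ m2 := le_trans (Nat.div_le_self _ _) h12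
  have hc1 : v1 * v2 ≤ m1 := Nat.mul_div_le m1 v1
  have hkeyB1 : m1 ≤ 2 * (v1 * v2) := hv2def ▸ nat_twice_div hv1pos hv1m1
  clear_value v2
  clear hv2def
  set v3 := min (m2 / v2) (m3 / v1) with hv3def
  have hv3pos : 1 ≤ v3 := le_min ((Nat.one_le_div_iff hv2pos).2 hv2m2)
    ((Nat.one_le_div_iff hv1pos).2 hv1m3)
  have hc2 : v2 * v3 ≤ m2 := le_trans
    (Nat.mul_le_mul_left v2 (min_le_left _ _)) (Nat.mul_div_le m2 v2)
  have hc3 : v3 * v1 ≤ m3 := by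
    calc v3 * v1 ≤ (m3 / v1) * v1 := Nat.mul_le_mul_right v1 (min_le_right _ _)
    _ ≤ m3 := Nat.div_mul_le_self _ _
  have hcases : m2 ≤ 2 * (v2 * v3) ∨ m3 ≤ 2 * (v1 * v3) := by
    rcases min_cases (m2 / v2) (m3 / v1) with ⟨hmin, _⟩ | ⟨hmin, _⟩
    · left; rw [hv3def, hmin]; exact nat_twice_div hv2pos hv2m2
    · right; rw [hv3def, hmin]; exact nat_twice_div hv1pos hv1m3
  have hv3spec : (m2 = m3 ∧ v2 = 1 ∧ v1 = 1) → v3 = m2 := by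
    rintro ⟨ha, hb, hc⟩
    rw [hv3def, hb, hc, ← ha, Nat.div_one, min_self]
  clear_value v3
  clear hv3def
  have hmain : m1 * m2 * m3 ≤ 16 * (v1 * v2 * v3)^2 := by
    rcases hcases with key2 | key2
    · -- case A : 2 v2 v3 ≥ m2
      have key1 : m1 * m3 ≤ 4 * v1^2 * m2 := by
        have e : m2 * (q+1) ≤ m2 * (4 * v1^2) := Nat.mul_le_mul_left _ hv1q
        calc m1 * m3 ≤ m2 * (q+1) := le_of_lt hqgt
        _ ≤ m2 * (4 * v1^2) := e
        _ = 4 * v1^2 * m2 := by ring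
      calc m1 * m2 * m3 = (m1 * m3) * m2 := by ring
      _ ≤ (4 * v1^2 * m2) * (2 * (v2 * v3)) := Nat.mul_le_mul key1 key2
      _ = (v1^2 * (v2*v3)) * (8 * m2) := by ring
      _ ≤ (v1^2 * (v2*v3)) * (8 * (2 * (v2 * v3))) := Nat.mul_le_mul_left _ (Nat.mul_le_mul_left _ key2)
      _ = 16 * (v1 * v2 * v3)^2 := by ring
    · -- case B : 2 v1 v3 ≥ m3
      have hq' : v1^2 * m2 ≤ m1 * m3 := by
        calc v1^2 * m2 ≤ q * m2 := Nat.mul_le_mul_right _ hv1sq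
        _ ≤ m1 * m3 := hqle
      have e1 : m1^2 * m3^2 ≤ 16 * (v1^2 * (v1 * v2 * v3)^2) := by
        calc m1^2 * m3^2 = (m1 * m1) * (m3 * m3) := by ring
        _ ≤ (2*(v1*v2) * (2*(v1*v2))) * (2*(v1*v3) * (2*(v1*v3))) :=
          Nat.mul_le_mul (Nat.mul_le_mul hkeyB1 hkeyB1) (Nat.mul_le_mul key2 key2)
        _ = 16 * (v1^2 * (v1 * v2 * v3)^2) := by ring
      have e5 : (v1^2 * m2) * (m1*m2*m3) ≤ (v1^2 * m2) * (16 * (v1*v2*v3)^2) := by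
        calc (v1^2*m2) * (m1*m2*m3) ≤ (m1*m3) * (m1*m2*m3) := Nat.mul_le_mul_right _ hq'
        _ = (m1^2*m3^2) * m2 := by ring
        _ ≤ (16 * (v1^2 * (v1*v2*v3)^2)) * m2 := Nat.mul_le_mul_right _ e1
        _ = (v1^2 * m2) * (16 * (v1*v2*v3)^2) := by ring
      exact Nat.le_of_mul_le_mul_left e5 (by positivity)
  refine ⟨v1, v2, v3, hv1pos, hv2pos, hv3pos, hc1, hc2, hc3, hmain, ?_⟩
  intro hm1
  have hm32 : m3 = m2 := le_antisymm (by simpa [hm1] using htri) h23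
  have hq : q = 1 := by
    have : q * m2 ≤ 1 * m3 := by simpa [hm1] using hqle
    have h2m : q ≤ 1 := by
      by_contra hq2
      have h2q : 2 ≤ q := by omega
      have := Nat.mul_le_mul_right m2 h2q
      have hmm : m3 = m2 := hm32
      omega
    omega
  have hv1 : v1 = 1 := hv1one hq
  have hv2 : v2 = 1 := by
    have := hc1
    rw [hv1, one_mul] at this
    omega
  have hv3 : v3 = m2 := hv3spec ⟨hm32.symm, hv2, hv1⟩
  rw [hm1, hm32, hv1, hv2, hv3]; exact le_of_eq (by ring)


lemma fin3_succ0 : (0 : Fin 3) + 1 = 1 := rfl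
lemma fin3_succ1 : (1 : Fin 3) + 1 = 2 := rfl
lemma fin3_succ2 : (2 : Fin 3) + 1 = 0 := rfl

lemma triple_symm (P : Fin 3 → ℕ) (hP : ∀ t, 1 ≤ P t)
    (hsq : ∀ t, (P t)^2 ≤ P 0 * P 1 * P 2) :
    ∃ u : Fin 3 → ℕ, (∀ t, 1 ≤ u t) ∧ (∀ t, u t * u (t + 1) ≤ P t) ∧
      P 0 * P 1 * P 2 ≤ 16 * (u 0 * u 1 * u 2)^2 ∧
      ((∃ t, P t = 1) → P 0 * P 1 * P 2 ≤ (u 0 * u 1 * u 2)^2) := by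
  have hdiv : ∀ a b c : Fin 3, P a * P b * P c = P 0 * P 1 * P 2 → P c ≤ P a * P b := by
    intro a b c hprod
    have h := hsq c
    rw [← hprod] at h
    have hc : 1 ≤ P c := hP c
    have h' : P c * P c ≤ (P a * P b) * P c := by
      calc P c * P c = (P c)^2 := by ring
      _ ≤ P a * P b * P c := h
    exact Nat.le_of_mul_le_mul_right h' (by omega)
  have h0 := hP 0; have h1 := hP 1; have h2 := hP 2
  rcases le_total (P 0) (P 1) with h01 | h10
  · rcases le_total (P 1) (P 2) with h12 | h21
    · obtain ⟨v1, v2, v3, hw1, hw2, hw3, e1, e2, e3, big, sml⟩ :=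
        triple_sorted (hP 0) h01 h12 (hdiv 0 1 2 (by ring))
      have c0 : v1 * v2 ≤ P 0 := e1
      have c1 : v2 * v3 ≤ P 1 := e2
      have c2 : v3 * v1 ≤ P 2 := e3
      refine ⟨![v1, v2, v3], ?_, ?_, ?_, ?_⟩
      · intro t; fin_cases t <;> simpa
      · intro t
        fin_cases t <;>
          simp only [fin3_succ0, fin3_succ1, fin3_succ2, Matrix.cons_val_zero,
            Matrix.cons_val_one, Matrix.head_cons, Matrix.cons_val_two, Matrix.tail_cons]
        exacts [c0, c1, c2]
      · simp only [Matrix.cons_val_zero, Matrix.cons_val_one, Matrix.head_cons,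
          Matrix.cons_val_two, Matrix.tail_cons]
        calc P 0 * P 1 * P 2 = P 0 * P 1 * P 2 := by ring
        _ ≤ 16 * (v1 * v2 * v3)^2 := big
        _ = 16 * (v1 * v2 * v3)^2 := by ring
      · rintro ⟨t, ht⟩
        have hm1 : P 0 = 1 := by fin_cases t <;> simp only [Fin.zero_eta, Fin.mk_one, Fin.reduceFinMk] at ht <;> omega
        simp only [Matrix.cons_val_zero, Matrix.cons_val_one, Matrix.head_cons,
          Matrix.cons_val_two, Matrix.tail_cons]
        calc P 0 * P 1 * P 2 = P 0 * P 1 * P 2 := by ring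
        _ ≤ (v1 * v2 * v3)^2 := sml hm1
        _ = (v1 * v2 * v3)^2 := by ring
    · rcases le_total (P 0) (P 2) with h02 | h20
      · obtain ⟨v1, v2, v3, hw1, hw2, hw3, e1, e2, e3, big, sml⟩ :=
          triple_sorted (hP 0) h02 h21 (hdiv 0 2 1 (by ring))
        have c0 : v2 * v1 ≤ P 0 := by rw [mul_comm]; exact e1
        have c1 : v1 * v3 ≤ P 1 := by rw [mul_comm]; exact e3
        have c2 : v3 * v2 ≤ P 2 := by rw [mul_comm]; exact e2
        refine ⟨![v2, v1, v3], ?_, ?_, ?_, ?_⟩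
        · intro t; fin_cases t <;> simpa
        · intro t
          fin_cases t <;>
            simp only [fin3_succ0, fin3_succ1, fin3_succ2, Matrix.cons_val_zero,
              Matrix.cons_val_one, Matrix.head_cons, Matrix.cons_val_two, Matrix.tail_cons]
          exacts [c0, c1, c2]
        · simp only [Matrix.cons_val_zero, Matrix.cons_val_one, Matrix.head_cons,
            Matrix.cons_val_two, Matrix.tail_cons]
          calc P 0 * P 1 * P 2 = P 0 * P 2 * P 1 := by ring
          _ ≤ 16 * (v1 * v2 * v3)^2 := big
          _ = 16 * (v2 * v1 * v3)^2 := by ring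
        · rintro ⟨t, ht⟩
          have hm1 : P 0 = 1 := by fin_cases t <;> simp only [Fin.zero_eta, Fin.mk_one, Fin.reduceFinMk] at ht <;> omega
          simp only [Matrix.cons_val_zero, Matrix.cons_val_one, Matrix.head_cons,
            Matrix.cons_val_two, Matrix.tail_cons]
          calc P 0 * P 1 * P 2 = P 0 * P 2 * P 1 := by ring
          _ ≤ (v1 * v2 * v3)^2 := sml hm1
          _ = (v2 * v1 * v3)^2 := by ring
      · obtain ⟨v1, v2, v3, hw1, hw2, hw3, e1, e2, e3, big, sml⟩ :=
          triple_sorted (hP 2) h20 h01 (hdiv 2 0 1 (by ring))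
        have c0 : v2 * v3 ≤ P 0 := e2
        have c1 : v3 * v1 ≤ P 1 := e3
        have c2 : v1 * v2 ≤ P 2 := e1
        refine ⟨![v2, v3, v1], ?_, ?_, ?_, ?_⟩
        · intro t; fin_cases t <;> simpa
        · intro t
          fin_cases t <;>
            simp only [fin3_succ0, fin3_succ1, fin3_succ2, Matrix.cons_val_zero,
              Matrix.cons_val_one, Matrix.head_cons, Matrix.cons_val_two, Matrix.tail_cons]
          exacts [c0, c1, c2]
        · simp only [Matrix.cons_val_zero, Matrix.cons_val_one, Matrix.head_cons,
            Matrix.cons_val_two, Matrix.tail_cons]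
          calc P 0 * P 1 * P 2 = P 2 * P 0 * P 1 := by ring
          _ ≤ 16 * (v1 * v2 * v3)^2 := big
          _ = 16 * (v2 * v3 * v1)^2 := by ring
        · rintro ⟨t, ht⟩
          have hm1 : P 2 = 1 := by fin_cases t <;> simp only [Fin.zero_eta, Fin.mk_one, Fin.reduceFinMk] at ht <;> omega
          simp only [Matrix.cons_val_zero, Matrix.cons_val_one, Matrix.head_cons,
            Matrix.cons_val_two, Matrix.tail_cons]
          calc P 0 * P 1 * P 2 = P 2 * P 0 * P 1 := by ring
          _ ≤ (v1 * v2 * v3)^2 := sml hm1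
          _ = (v2 * v3 * v1)^2 := by ring
  · rcases le_total (P 1) (P 2) with h12 | h21
    · rcases le_total (P 0) (P 2) with h02 | h20
      · obtain ⟨v1, v2, v3, hw1, hw2, hw3, e1, e2, e3, big, sml⟩ :=
          triple_sorted (hP 1) h10 h02 (hdiv 1 0 2 (by ring))
        have c0 : v3 * v2 ≤ P 0 := by rw [mul_comm]; exact e2
        have c1 : v2 * v1 ≤ P 1 := by rw [mul_comm]; exact e1
        have c2 : v1 * v3 ≤ P 2 := by rw [mul_comm]; exact e3
        refine ⟨![v3, v2, v1], ?_, ?_, ?_, ?_⟩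
        · intro t; fin_cases t <;> simpa
        · intro t
          fin_cases t <;>
            simp only [fin3_succ0, fin3_succ1, fin3_succ2, Matrix.cons_val_zero,
              Matrix.cons_val_one, Matrix.head_cons, Matrix.cons_val_two, Matrix.tail_cons]
          exacts [c0, c1, c2]
        · simp only [Matrix.cons_val_zero, Matrix.cons_val_one, Matrix.head_cons,
            Matrix.cons_val_two, Matrix.tail_cons]
          calc P 0 * P 1 * P 2 = P 1 * P 0 * P 2 := by ring
          _ ≤ 16 * (v1 * v2 * v3)^2 := big
          _ = 16 * (v3 * v2 * v1)^2 := by ring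
        · rintro ⟨t, ht⟩
          have hm1 : P 1 = 1 := by fin_cases t <;> simp only [Fin.zero_eta, Fin.mk_one, Fin.reduceFinMk] at ht <;> omega
          simp only [Matrix.cons_val_zero, Matrix.cons_val_one, Matrix.head_cons,
            Matrix.cons_val_two, Matrix.tail_cons]
          calc P 0 * P 1 * P 2 = P 1 * P 0 * P 2 := by ring
          _ ≤ (v1 * v2 * v3)^2 := sml hm1
          _ = (v3 * v2 * v1)^2 := by ring
      · obtain ⟨v1, v2, v3, hw1, hw2, hw3, e1, e2, e3, big, sml⟩ :=
          triple_sorted (hP 1) h12 h20 (hdiv 1 2 0 (by ring))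
        have c0 : v3 * v1 ≤ P 0 := e3
        have c1 : v1 * v2 ≤ P 1 := e1
        have c2 : v2 * v3 ≤ P 2 := e2
        refine ⟨![v3, v1, v2], ?_, ?_, ?_, ?_⟩
        · intro t; fin_cases t <;> simpa
        · intro t
          fin_cases t <;>
            simp only [fin3_succ0, fin3_succ1, fin3_succ2, Matrix.cons_val_zero,
              Matrix.cons_val_one, Matrix.head_cons, Matrix.cons_val_two, Matrix.tail_cons]
          exacts [c0, c1, c2]
        · simp only [Matrix.cons_val_zero, Matrix.cons_val_one, Matrix.head_cons,
            Matrix.cons_val_two, Matrix.tail_cons]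
          calc P 0 * P 1 * P 2 = P 1 * P 2 * P 0 := by ring
          _ ≤ 16 * (v1 * v2 * v3)^2 := big
          _ = 16 * (v3 * v1 * v2)^2 := by ring
        · rintro ⟨t, ht⟩
          have hm1 : P 1 = 1 := by fin_cases t <;> simp only [Fin.zero_eta, Fin.mk_one, Fin.reduceFinMk] at ht <;> omega
          simp only [Matrix.cons_val_zero, Matrix.cons_val_one, Matrix.head_cons,
            Matrix.cons_val_two, Matrix.tail_cons]
          calc P 0 * P 1 * P 2 = P 1 * P 2 * P 0 := by ring
          _ ≤ (v1 * v2 * v3)^2 := sml hm1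
          _ = (v3 * v1 * v2)^2 := by ring
    · obtain ⟨v1, v2, v3, hw1, hw2, hw3, e1, e2, e3, big, sml⟩ :=
        triple_sorted (hP 2) h21 h10 (hdiv 2 1 0 (by ring))
      have c0 : v1 * v3 ≤ P 0 := by rw [mul_comm]; exact e3
      have c1 : v3 * v2 ≤ P 1 := by rw [mul_comm]; exact e2
      have c2 : v2 * v1 ≤ P 2 := by rw [mul_comm]; exact e1
      refine ⟨![v1, v3, v2], ?_, ?_, ?_, ?_⟩
      · intro t; fin_cases t <;> simpa
      · intro t
        fin_cases t <;>
          simp only [fin3_succ0, fin3_succ1, fin3_succ2, Matrix.cons_val_zero,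
            Matrix.cons_val_one, Matrix.head_cons, Matrix.cons_val_two, Matrix.tail_cons]
        exacts [c0, c1, c2]
      · simp only [Matrix.cons_val_zero, Matrix.cons_val_one, Matrix.head_cons,
          Matrix.cons_val_two, Matrix.tail_cons]
        calc P 0 * P 1 * P 2 = P 2 * P 1 * P 0 := by ring
        _ ≤ 16 * (v1 * v2 * v3)^2 := big
        _ = 16 * (v1 * v3 * v2)^2 := by ring
      · rintro ⟨t, ht⟩
        have hm1 : P 2 = 1 := by fin_cases t <;> simp only [Fin.zero_eta, Fin.mk_one, Fin.reduceFinMk] at ht <;> omega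
        simp only [Matrix.cons_val_zero, Matrix.cons_val_one, Matrix.head_cons,
          Matrix.cons_val_two, Matrix.tail_cons]
        calc P 0 * P 1 * P 2 = P 2 * P 1 * P 0 := by ring
        _ ≤ (v1 * v2 * v3)^2 := sml hm1
        _ = (v1 * v3 * v2)^2 := by ring


lemma partition3 {d : ℕ} (n : Fin d → ℕ) (hd : 1 ≤ d) (hn : ∀ k, 2 ≤ n k)
    (hsq : ∀ k, (n k)^2 ≤ ∏ j, n j) :
    ∃ c : Fin d → Fin 3,
      ∀ t, (∏ k ∈ Finset.univ.filter (fun k => c k = t), n k)^2 ≤ ∏ j, n j := by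
  classical
  set N := ∏ j, n j with hN
  have hN1 : 1 ≤ N := Finset.one_le_prod' (fun k _ => by linarith [hn k])
  obtain ⟨k0, -, hk0⟩ := Finset.exists_max_image Finset.univ n ⟨⟨0, hd⟩, mem_univ _⟩
  set R := Finset.univ.erase k0 with hR
  set F := R.powerset.filter (fun B => (∏ k ∈ B, n k)^2 ≤ N) with hF
  have hFne : F.Nonempty := ⟨∅, by simp [hF, hN1]⟩
  obtain ⟨B, hBmem, hBmax⟩ := Finset.exists_max_image F (fun B => ∏ k ∈ B, n k) hFne
  have hBsub : B ⊆ R := mem_powerset.mp (mem_filter.mp hBmem).1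
  have hBle : (∏ k ∈ B, n k)^2 ≤ N := (mem_filter.mp hBmem).2
  refine ⟨fun k => if k = k0 then 0 else if k ∈ B then 1 else 2, ?_⟩
  set c : Fin d → Fin 3 := fun k => if k = k0 then 0 else if k ∈ B then 1 else 2 with hc
  have f0 : Finset.univ.filter (fun k => c k = 0) = {k0} := by
    ext k
    simp only [mem_filter, mem_univ, true_and, mem_singleton, hc]
    split_ifs with h1 h2
    · simp [h1]
    · simp [h1]
    · simp [h1]
  have f1 : Finset.univ.filter (fun k => c k = 1) = B := by
    ext k
    simp only [mem_filter, mem_univ, true_and, hc]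
    split_ifs with h1 h2
    · simp only [show (0 : Fin 3) ≠ 1 by decide, false_iff]
      intro hk; exact (Finset.mem_erase.mp (hBsub hk)).1 h1
    · simp [h2]
    · simp [h2]
  have f2 : Finset.univ.filter (fun k => c k = 2) = R \ B := by
    ext k
    simp only [mem_filter, mem_univ, true_and, hc, Finset.mem_sdiff, hR, mem_erase]
    split_ifs with h1 h2
    · simp [h1]
    · simp only [show (1 : Fin 3) ≠ 2 by decide, false_iff]
      intro hk; exact hk.2 h2
    · simp [h1, h2]
  have hprodall : (∏ k ∈ Finset.univ.filter (fun k => c k = (0:Fin 3)), n k) *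
      (∏ k ∈ Finset.univ.filter (fun k => c k = 1), n k) *
      (∏ k ∈ Finset.univ.filter (fun k => c k = 2), n k) = N := by
    have h := Finset.prod_fiberwise Finset.univ c n
    rw [Fin.prod_univ_three] at h
    exact h
  intro t
  have ht0 : (∏ k ∈ Finset.univ.filter (fun k => c k = (0:Fin 3)), n k)^2 ≤ N := by
    rw [f0, prod_singleton]; exact hsq k0
  have ht1 : (∏ k ∈ Finset.univ.filter (fun k => c k = (1:Fin 3)), n k)^2 ≤ N := by
    rw [f1]; exact hBle
  have ht2 : (∏ k ∈ Finset.univ.filter (fun k => c k = (2:Fin 3)), n k)^2 ≤ N := by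
    rw [f2]
    rcases (R \ B).eq_empty_or_nonempty with he | ⟨j, hj⟩
    · rw [he]; simpa using hN1
    · obtain ⟨hjR, hjB⟩ := Finset.mem_sdiff.mp hj
      have hjk0 : j ≠ k0 := (Finset.mem_erase.mp hjR).1
      have hins : insert j B ⊆ R := Finset.insert_subset hjR hBsub
      have hgt : ¬ ((∏ k ∈ insert j B, n k)^2 ≤ N) := by
        intro hcon
        have hmem' : insert j B ∈ F := mem_filter.mpr ⟨mem_powerset.mpr hins, hcon⟩
        have := hBmax _ hmem'
        rw [Finset.prod_insert hjB] at this
        have h2j : 2 ≤ n j := hn j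
        have hp1 : 1 ≤ ∏ k ∈ B, n k := Finset.one_le_prod' (fun k _ => by linarith [hn k])
        nlinarith
      rw [Finset.prod_insert hjB] at hgt
      push_neg at hgt
      have hle0 : n j ≤ n k0 := hk0 j (mem_univ j)
      -- abbreviations
      set p0 := ∏ k ∈ Finset.univ.filter (fun k => c k = (0:Fin 3)), n k with hp0
      set p1 := ∏ k ∈ Finset.univ.filter (fun k => c k = (1:Fin 3)), n k with hp1
      set p2 := ∏ k ∈ Finset.univ.filter (fun k => c k = (2:Fin 3)), n k with hp2
      have hp0v : p0 = n k0 := by rw [hp0, f0, prod_singleton]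
      have hp1v : p1 = ∏ k ∈ B, n k := by rw [hp1, f1]
      have hp2v : p2 = ∏ k ∈ R \ B, n k := by rw [hp2, f2]
      have hNle : N ≤ (p0 * p1)^2 := by
        have h1 : N < (n j * p1)^2 := by rw [hp1v]; exact hgt
        have h2 : (n j * p1)^2 ≤ (p0 * p1)^2 := by
          have : n j * p1 ≤ p0 * p1 := Nat.mul_le_mul_right _ (hp0v ▸ hle0)
          exact Nat.pow_le_pow_left this 2
        omega
      have hNprod : p0 * p1 * p2 = N := hprodall
      rw [← hp2v]
      have hcancel : p2^2 * (p0*p1)^2 ≤ N * (p0*p1)^2 := by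
        calc p2^2 * (p0*p1)^2 = (p0*p1*p2)^2 := by ring
        _ = N^2 := by rw [hNprod]
        _ = N * N := by ring
        _ ≤ N * (p0*p1)^2 := Nat.mul_le_mul_left _ hNle
      have hpos : 0 < (p0*p1)^2 := by
        have : 1 ≤ p0 * p1 := by
          have a1 : 1 ≤ p0 := hp0v ▸ by linarith [hn k0]
          have a2 : 1 ≤ p1 := hp1v ▸ Finset.one_le_prod' (fun k _ => by linarith [hn k])
          exact Nat.one_le_iff_ne_zero.mpr (by positivity)
        positivity
      exact Nat.le_of_mul_le_mul_right hcancel hpos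
  fin_cases t
  · exact ht0
  · exact ht1
  · exact ht2


lemma sum_comp_le_sum {α β : Type*} [Fintype α] [Fintype β] (g : α → β)
    (hg : Function.Injective g) (f : β → ℝ) (hf : ∀ b, 0 ≤ f b) :
    ∑ a, f (g a) ≤ ∑ b, f b := by
  calc ∑ a, f (g a) = ∑ x ∈ Finset.map ⟨g, hg⟩ Finset.univ, f x :=
        (Finset.sum_map Finset.univ ⟨g, hg⟩ f).symm
  _ ≤ ∑ b, f b := Finset.sum_le_sum_of_subset_of_nonneg (Finset.subset_univ _)
        (fun b _ _ => hf b)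

lemma cs3 {A B C : Type*} [Fintype A] [Fintype B] [Fintype C]
    (Y0 : A × B → ℝ) (Y1 : B × C → ℝ) (Y2 : C × A → ℝ)
    (h0 : ∑ q, (Y0 q)^2 ≤ 1) (h1 : ∑ q, (Y1 q)^2 ≤ 1) (h2 : ∑ q, (Y2 q)^2 ≤ 1) :
    |∑ a : A, ∑ b : B, ∑ c : C, Y0 (a,b) * Y1 (b,c) * Y2 (c,a)| ≤ 1 := by
  classical
  set Z : A × B → ℝ := fun q => ∑ c : C, Y1 (q.2, c) * Y2 (c, q.1) with hZ
  have hS : ∑ a : A, ∑ b : B, ∑ c : C, Y0 (a,b) * Y1 (b,c) * Y2 (c,a)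
      = ∑ q : A × B, Y0 q * Z q := by
    rw [Fintype.sum_prod_type (fun q : A × B => Y0 q * Z q)]
    refine Finset.sum_congr rfl fun a _ => Finset.sum_congr rfl fun b _ => ?_
    rw [hZ, Finset.mul_sum]
    exact Finset.sum_congr rfl fun c _ => by ring
  rw [hS]
  have hZsq : ∑ q : A × B, (Z q)^2 ≤ 1 := by
    have hpt : ∀ q : A × B,
        (Z q)^2 ≤ (∑ cc : C, (Y1 (q.2, cc))^2) * (∑ cc : C, (Y2 (cc, q.1))^2) := by
      intro q
      have := Finset.sum_mul_sq_le_sq_mul_sq Finset.univ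
        (fun cc : C => Y1 (q.2, cc)) (fun cc : C => Y2 (cc, q.1))
      simpa [hZ] using this
    have h3 : ∑ q : A × B, (Z q)^2
        ≤ ∑ q : A × B, (∑ cc : C, (Y1 (q.2, cc))^2) * (∑ cc : C, (Y2 (cc, q.1))^2) :=
      Finset.sum_le_sum fun q _ => hpt q
    have e1 : ∑ b : B, ∑ cc : C, (Y1 (b, cc))^2 = ∑ q : B × C, (Y1 q)^2 :=
      (Fintype.sum_prod_type (fun q : B × C => (Y1 q)^2)).symm
    have e2 : ∑ a : A, ∑ cc : C, (Y2 (cc, a))^2 = ∑ q : C × A, (Y2 q)^2 := by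
      rw [Fintype.sum_prod_type (fun q : C × A => (Y2 q)^2)]
      exact Finset.sum_comm
    have h4 : ∑ q : A × B, (∑ cc : C, (Y1 (q.2, cc))^2) * (∑ cc : C, (Y2 (cc, q.1))^2)
        = (∑ q : B × C, (Y1 q)^2) * (∑ q : C × A, (Y2 q)^2) := by
      calc ∑ q : A × B, (∑ cc : C, (Y1 (q.2, cc))^2) * (∑ cc : C, (Y2 (cc, q.1))^2)
          = ∑ a : A, ∑ b : B, (∑ cc : C, (Y1 (b, cc))^2) * (∑ cc : C, (Y2 (cc, a))^2) := by
            exact Fintype.sum_prod_type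
              (fun q : A × B => (∑ cc : C, (Y1 (q.2, cc))^2) * (∑ cc : C, (Y2 (cc, q.1))^2))
      _ = ∑ a : A, (∑ b : B, ∑ cc : C, (Y1 (b, cc))^2) * (∑ cc : C, (Y2 (cc, a))^2) := by
            exact Finset.sum_congr rfl fun a _ => by rw [Finset.sum_mul]
      _ = (∑ b : B, ∑ cc : C, (Y1 (b, cc))^2) * ∑ a : A, ∑ cc : C, (Y2 (cc, a))^2 := by
            rw [Finset.mul_sum]
      _ = _ := by rw [e1, e2]
    have h5 : (∑ q : B × C, (Y1 q)^2) * (∑ q : C × A, (Y2 q)^2) ≤ 1 := by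
      have f1 : 0 ≤ ∑ q : B × C, (Y1 q)^2 := Finset.sum_nonneg fun q _ => sq_nonneg _
      have f2 : 0 ≤ ∑ q : C × A, (Y2 q)^2 := Finset.sum_nonneg fun q _ => sq_nonneg _
      nlinarith
    linarith [h4 ▸ h3]
  have key : (∑ q : A × B, Y0 q * Z q)^2 ≤ 1 := by
    have csq := Finset.sum_mul_sq_le_sq_mul_sq Finset.univ Y0 Z
    have g1 : 0 ≤ ∑ q : A × B, (Y0 q)^2 := Finset.sum_nonneg fun q _ => sq_nonneg _
    have g2 : 0 ≤ ∑ q : A × B, (Z q)^2 := Finset.sum_nonneg fun q _ => sq_nonneg _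
    nlinarith
  calc |∑ q : A × B, Y0 q * Z q| = Real.sqrt ((∑ q : A × B, Y0 q * Z q)^2) :=
        (Real.sqrt_sq_eq_abs _).symm
  _ ≤ Real.sqrt 1 := Real.sqrt_le_sqrt key
  _ = 1 := Real.sqrt_one


/-! ### The construction -/

section Construction
variable {d : ℕ} (n : Fin d → ℕ) (c : Fin d → Fin 3) (u : Fin 3 → ℕ)

def Pprod (t : Fin 3) : ℕ := ∏ k ∈ Finset.univ.filter (fun k => c k = t), n k

lemma card_grp (t : Fin 3) :
    Fintype.card (∀ k : {k // c k = t}, Fin (n k.1)) = Pprod n c t := by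
  calc Fintype.card (∀ k : {k // c k = t}, Fin (n k.1))
      = ∏ k' : {k // c k = t}, n k'.1 := by simp [Fintype.card_pi]
  _ = Pprod n c t := (Finset.prod_subtype _ (by simp) n).symm

def Edef (t : Fin 3) : (∀ k : {k // c k = t}, Fin (n k.1)) ≃ Fin (Pprod n c t) :=
  Fintype.equivFinOfCardEq (card_grp n c t)

variable (hcon : ∀ t, u t * u (t + 1) ≤ Pprod n c t)

def Gdef (t : Fin 3) (q : Fin (u t) × Fin (u (t + 1))) :
    ∀ k : {k // c k = t}, Fin (n k.1) :=
  (Edef n c t).symm (Fin.castLE (hcon t) (finProdFinEquiv q))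

lemma Gdef_inj (t : Fin 3) : Function.Injective (Gdef n c u hcon t) := by
  intro q q' h
  have h1 := (Edef n c t).symm.injective h
  have h2 := Fin.castLE_injective (hcon t) h1
  exact finProdFinEquiv.injective h2

def Phi (p : ∀ t, Fin (u t)) : ∀ k, Fin (n k) :=
  fun k => Gdef n c u hcon (c k) (p (c k), p (c k + 1)) ⟨k, rfl⟩

lemma Phi_spec (p : ∀ t, Fin (u t)) (t : Fin 3) (k : Fin d) (h : c k = t) :
    Phi n c u hcon p k = Gdef n c u hcon t (p t, p (t + 1)) ⟨k, h⟩ := by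
  subst h; rfl

lemma Phi_grp (p : ∀ t, Fin (u t)) (t : Fin 3) :
    (fun k' : {k // c k = t} => Phi n c u hcon p k'.1)
      = Gdef n c u hcon t (p t, p (t + 1)) := by
  funext k'
  exact Phi_spec n c u hcon p t k'.1 k'.2

lemma Phi_inj : Function.Injective (Phi n c u hcon) := by
  intro p p' h
  funext t
  have hg : Gdef n c u hcon t (p t, p (t + 1)) = Gdef n c u hcon t (p' t, p' (t + 1)) := by
    rw [← Phi_grp, ← Phi_grp, h]
  have := Gdef_inj n c u hcon t hg
  exact ((Prod.mk.injEq _ _ _ _).mp this).1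

open Classical in
def Tdef : (∀ k, Fin (n k)) → ℝ :=
  fun i => if ∃ p : ∀ t, Fin (u t), Phi n c u hcon p = i then 1 else 0

lemma Tdef_nonneg (i : ∀ k, Fin (n k)) : 0 ≤ Tdef n c u hcon i := by
  rw [Tdef]; split <;> norm_num

lemma Tdef_ne_zero (hu : ∀ t, 1 ≤ u t) : Tdef n c u hcon ≠ 0 := by
  intro h
  have h1 := congrFun h (Phi n c u hcon (fun t => ⟨0, hu t⟩))
  rw [Tdef, if_pos ⟨_, rfl⟩] at h1
  exact one_ne_zero h1

open Classical in
lemma Tdef_filter :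
    (Finset.univ.filter fun i => ∃ p : ∀ t, Fin (u t), Phi n c u hcon p = i)
      = Finset.univ.image (Phi n c u hcon) := by
  ext i
  simp [eq_comm]

lemma Tdef_sumsq : ∑ i, (Tdef n c u hcon i)^2 = ((∏ t, u t : ℕ) : ℝ) := by
  classical
  have h1 : ∀ i, (Tdef n c u hcon i)^2 = Tdef n c u hcon i := by
    intro i; rw [Tdef]; split <;> norm_num
  rw [Finset.sum_congr rfl (fun i _ => h1 i)]
  unfold Tdef
  rw [Finset.sum_boole]
  rw [Tdef_filter]
  rw [Finset.card_image_of_injective _ (Phi_inj n c u hcon)]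
  simp [Fintype.card_pi]

def Ydef (X : ∀ k, Fin (n k) → ℝ) (t : Fin 3) (q : Fin (u t) × Fin (u (t + 1))) : ℝ :=
  ∏ k' : {k // c k = t}, X k'.1 (Gdef n c u hcon t q k')

lemma Ysq_le_one (X : ∀ k, Fin (n k) → ℝ) (hX : ∀ k, ∑ j, (X k j)^2 = 1) (t : Fin 3) :
    ∑ q : Fin (u t) × Fin (u (t + 1)), (Ydef n c u hcon X t q)^2 ≤ 1 := by
  have step1 : ∀ q : Fin (u t) × Fin (u (t + 1)), (Ydef n c u hcon X t q)^2
      = ∏ k' : {k // c k = t}, (X k'.1 (Gdef n c u hcon t q k'))^2 := by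
    intro q
    rw [Ydef, ← Finset.prod_pow]
  calc ∑ q : Fin (u t) × Fin (u (t + 1)), (Ydef n c u hcon X t q)^2
      = ∑ q : Fin (u t) × Fin (u (t + 1)),
          ∏ k' : {k // c k = t}, (X k'.1 (Gdef n c u hcon t q k'))^2 :=
        Finset.sum_congr rfl fun q _ => step1 q
  _ ≤ ∑ γ : (∀ k' : {k // c k = t}, Fin (n k'.1)),
        ∏ k' : {k // c k = t}, (X k'.1 (γ k'))^2 :=
      sum_comp_le_sum (Gdef n c u hcon t) (Gdef_inj n c u hcon t)
        (fun γ => ∏ k' : {k // c k = t}, (X k'.1 (γ k'))^2)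
        (fun γ => Finset.prod_nonneg fun _ _ => sq_nonneg _)
  _ = ∏ k' : {k // c k = t}, ∑ j : Fin (n k'.1), (X k'.1 j)^2 := by
      rw [Finset.prod_univ_sum (fun _ => Finset.univ)
        (fun (k' : {k // c k = t}) (j : Fin (n k'.1)) => (X k'.1 j)^2),
        Fintype.piFinset_univ]
  _ = 1 := Finset.prod_eq_one fun k' _ => hX k'.1

end Construction

section SumPi3
variable (u : Fin 3 → ℕ)

def E3 (x : Fin (u 0) × Fin (u 1) × Fin (u 2)) : ∀ t, Fin (u t) :=
  Fin.cons x.1 (Fin.cons x.2.1 (Fin.cons x.2.2 finZeroElim))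

lemma E3_bij : Function.Bijective (E3 u) := by
  rw [Function.bijective_iff_has_inverse]
  refine ⟨fun p => (p 0, p 1, p 2), fun x => ?_, fun p => ?_⟩
  · rfl
  · funext t
    fin_cases t <;> rfl

lemma sum_pi3 (Y : ∀ t : Fin 3, Fin (u t) × Fin (u (t + 1)) → ℝ) :
    ∑ p : (∀ t, Fin (u t)), ∏ t : Fin 3, Y t (p t, p (t + 1))
      = ∑ a : Fin (u 0), ∑ b : Fin (u 1), ∑ z : Fin (u 2),
          Y 0 (a, b) * Y 1 (b, z) * Y 2 (z, a) := by
  have key := Fintype.sum_bijective (E3 u) (E3_bij u)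
    (fun x : Fin (u 0) × Fin (u 1) × Fin (u 2) =>
      Y 0 (x.1, x.2.1) * Y 1 (x.2.1, x.2.2) * Y 2 (x.2.2, x.1))
    (fun p => ∏ t : Fin 3, Y t (p t, p (t + 1)))
    (fun x => by
      show _ = ∏ t : Fin 3, Y t (E3 u x t, E3 u x (t + 1))
      rw [Fin.prod_univ_three]; rfl)
  rw [← key]
  rw [Fintype.sum_prod_type (fun x : Fin (u 0) × Fin (u 1) × Fin (u 2) =>
    Y 0 (x.1, x.2.1) * Y 1 (x.2.1, x.2.2) * Y 2 (x.2.2, x.1))]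
  refine Finset.sum_congr rfl fun a _ => ?_
  exact Fintype.sum_prod_type (fun y : Fin (u 1) × Fin (u 2) =>
    Y 0 (a, y.1) * Y 1 (y.1, y.2) * Y 2 (y.2, a))

end SumPi3

section SpecBound
variable {d : ℕ} (n : Fin d → ℕ) (c : Fin d → Fin 3) (u : Fin 3 → ℕ)
variable (hcon : ∀ t, u t * u (t + 1) ≤ Pprod n c t)

lemma Tdef_spec (X : ∀ k, Fin (n k) → ℝ) (hX : ∀ k, ∑ j, (X k j)^2 = 1) :
    |∑ i, Tdef n c u hcon i * ∏ k, X k (i k)| ≤ 1 := by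
  classical
  have hA : ∑ i, Tdef n c u hcon i * ∏ k, X k (i k)
      = ∑ p : (∀ t, Fin (u t)), ∏ k, X k (Phi n c u hcon p k) := by
    have h1 : ∀ i, Tdef n c u hcon i * ∏ k, X k (i k)
        = if ∃ p : ∀ t, Fin (u t), Phi n c u hcon p = i then ∏ k, X k (i k) else 0 := by
      intro i; rw [Tdef]; split <;> simp
    rw [Finset.sum_congr rfl fun i _ => h1 i]
    rw [← Finset.sum_filter]
    rw [Tdef_filter]
    rw [Finset.sum_image (fun p _ p' _ h => Phi_inj n c u hcon h)]
  have hB : ∀ p : (∀ t, Fin (u t)), ∏ k, X k (Phi n c u hcon p k)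
      = ∏ t : Fin 3, Ydef n c u hcon X t (p t, p (t + 1)) := by
    intro p
    rw [← Finset.prod_fiberwise Finset.univ c (fun k => X k (Phi n c u hcon p k))]
    refine Finset.prod_congr rfl fun t _ => ?_
    rw [Ydef]
    rw [Finset.prod_subtype (p := fun k => c k = t) (F := inferInstance)
      (Finset.univ.filter fun k => c k = t) (by simp)
      (fun k => X k (Phi n c u hcon p k))]
    refine Finset.prod_congr rfl fun k' _ => ?_
    rw [Phi_spec n c u hcon p t k'.1 k'.2]
  rw [hA, Finset.sum_congr rfl (fun p _ => hB p), sum_pi3 u (Ydef n c u hcon X)]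
  exact cs3 _ _ _ (Ysq_le_one n c u hcon X hX 0) (Ysq_le_one n c u hcon X hX 1)
    (Ysq_le_one n c u hcon X hX 2)

lemma Tdef_specNorm : specNorm (Tdef n c u hcon) ≤ 1 := by
  apply Real.sSup_le _ zero_le_one
  rintro r ⟨x, hx, rfl⟩
  have hX : ∀ k, ∑ j, ((x k : Fin (n k) → ℝ) j)^2 = 1 := by
    intro k
    have h := hx k
    rw [EuclideanSpace.norm_eq] at h
    have h2 : ∑ j, ‖x k j‖^2 = 1 := by
      have hnn : 0 ≤ ∑ j, ‖x k j‖^2 := Finset.sum_nonneg fun j _ => sq_nonneg _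
      nlinarith [Real.sq_sqrt hnn, h]
    calc ∑ j, (x k j)^2 = ∑ j, ‖x k j‖^2 := by
          exact Finset.sum_congr rfl fun j _ => by rw [Real.norm_eq_abs, sq_abs]
    _ = 1 := h2
  exact Tdef_spec n c u hcon (fun k => x k) hX

end SpecBound

/-! ### phiPos membership helpers -/

lemma specNorm_nonneg {d : ℕ} {n : Fin d → ℕ} (T : (∀ k, Fin (n k)) → ℝ) :
    0 ≤ specNorm T :=
  Real.sSup_nonneg fun r ⟨x, _, hr⟩ => hr ▸ abs_nonneg _

lemma frobNorm_nonneg {d : ℕ} {n : Fin d → ℕ} (T : (∀ k, Fin (n k)) → ℝ) :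
    0 ≤ frobNorm T := Real.sqrt_nonneg _

lemma phiPos_le {d : ℕ} {n : Fin d → ℕ} (T : (∀ k, Fin (n k)) → ℝ)
    (h0 : T ≠ 0) (hpos : ∀ i, 0 ≤ T i) :
    phiPos n ≤ specNorm T / frobNorm T := by
  apply csInf_le
  · refine ⟨0, fun r hr => ?_⟩
    obtain ⟨S, _, _, rfl⟩ := hr
    exact div_nonneg (specNorm_nonneg S) (frobNorm_nonneg S)
  · exact ⟨T, h0, hpos, rfl⟩

theorem stmt_15 {d : ℕ} (hd : 1 ≤ d) (n : Fin d → ℕ) (hn : ∀ k, 2 ≤ n k)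
    (hmax : ∀ k, (n k : ℝ) ≤ Real.sqrt (∏ j, (n j : ℝ))) :
    phiPos n ≤ 2 ^ (((d : ℝ) + 1)/4) * (∏ k, (n k : ℝ)) ^ (-(1 : ℝ)/4) ∧
    ∃ T : (∀ k, Fin (n k)) → ℝ, T ≠ 0 ∧ (∀ i, 0 ≤ T i) ∧
      specNorm T ≤ 2 ^ (((d : ℝ) + 1)/4) * (∏ k, (n k : ℝ)) ^ (-(1 : ℝ)/4) * frobNorm T := by
  classical
  -- natural-number form of the hypotheses
  set N : ℕ := ∏ j, n j with hNdef
  have hcast : (∏ j, (n j : ℝ)) = (N : ℝ) := by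
    rw [hNdef]; push_cast; ring
  have hN1 : 1 ≤ N := Finset.one_le_prod' (fun k _ => by linarith [hn k])
  have hsq : ∀ k, (n k)^2 ≤ N := by
    intro k
    have h := hmax k
    rw [hcast] at h
    have hNnn : (0:ℝ) ≤ (N:ℝ) := by positivity
    have h2 : ((n k : ℝ))^2 ≤ (N:ℝ) := by
      nlinarith [Real.sq_sqrt hNnn, Real.sqrt_nonneg (N:ℝ), hmax k]
    exact_mod_cast h2
  -- the partition into three groups
  obtain ⟨c, hc⟩ := partition3 n hd hn hsq
  have hPprod : Pprod n c 0 * Pprod n c 1 * Pprod n c 2 = N := by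
    have h := Finset.prod_fiberwise Finset.univ c n
    rw [Fin.prod_univ_three] at h
    exact h
  have hP1 : ∀ t, 1 ≤ Pprod n c t := fun t =>
    Finset.one_le_prod' (fun k _ => by linarith [hn k])
  have hPsq : ∀ t, (Pprod n c t)^2 ≤ Pprod n c 0 * Pprod n c 1 * Pprod n c 2 := by
    intro t; rw [hPprod]; exact hc t
  -- the cyclic dimensions
  obtain ⟨u, hu1, hcon', hbig16, hbig1⟩ := triple_symm (Pprod n c) hP1 hPsq
  have hcon : ∀ t, u t * u (t + 1) ≤ Pprod n c t := hcon'
  set M : ℕ := u 0 * u 1 * u 2 with hMdef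
  have hM1 : 1 ≤ M := by
    have h := Nat.mul_le_mul (Nat.mul_le_mul (hu1 0) (hu1 1)) (hu1 2)
    simpa [hMdef] using h
  -- the key inequality N ≤ 2^(d+1) M^2
  have hkey : N ≤ 2^(d+1) * M^2 := by
    rcases Nat.lt_or_ge d 3 with hd3 | hd3
    · -- small d : some group is empty, so some Pprod = 1
      have hempty : ∃ t : Fin 3, Finset.univ.filter (fun k => c k = t) = ∅ := by
        by_contra hno
        push_neg at hno
        have hcard : ∀ t : Fin 3, 1 ≤ (Finset.univ.filter (fun k => c k = t)).card := by
          intro t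
          rcases (hno t) with ⟨k, hk⟩
          exact Finset.card_pos.mpr ⟨k, hk⟩
        have := Finset.card_eq_sum_card_fiberwise
          (f := c) (s := Finset.univ) (t := Finset.univ) (fun x _ => Finset.mem_univ _)
        rw [Finset.card_univ, Fintype.card_fin] at this
        have h3 : 3 ≤ ∑ t : Fin 3, (Finset.univ.filter (fun k => c k = t)).card := by
          calc (3:ℕ) = ∑ _t : Fin 3, 1 := by simp
          _ ≤ _ := Finset.sum_le_sum fun t _ => hcard t
        rw [Fin.sum_univ_three] at h3 this
        omega
      obtain ⟨t, ht⟩ := hempty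
      have hPt1 : Pprod n c t = 1 := by rw [Pprod, ht]; rfl
      have hNM : N ≤ M^2 := by
        rw [← hPprod, ← hMdef] at *
        exact hbig1 ⟨t, hPt1⟩
      calc N ≤ M^2 := hNM
      _ ≤ 2^(d+1) * M^2 := Nat.le_mul_of_pos_left _ (Nat.pow_pos (by norm_num))
    · -- d ≥ 3 : use the 16-bound
      have h16 : 2^4 ≤ 2^(d+1) := Nat.pow_le_pow_right (by norm_num) (by omega)
      calc N = Pprod n c 0 * Pprod n c 1 * Pprod n c 2 := hPprod.symm
      _ ≤ 16 * M^2 := hbig16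
      _ = 2^4 * M^2 := by norm_num
      _ ≤ 2^(d+1) * M^2 := Nat.mul_le_mul_right _ h16
  -- the tensor
  set T := Tdef n c u hcon with hT
  have hTne : T ≠ 0 := Tdef_ne_zero n c u hcon hu1
  have hTpos : ∀ i, 0 ≤ T i := Tdef_nonneg n c u hcon
  have hTspec : specNorm T ≤ 1 := Tdef_specNorm n c u hcon
  have hTfrob : frobNorm T = Real.sqrt M := by
    rw [frobNorm, hT, Tdef_sumsq]
    congr 2
    rw [hMdef, Fin.prod_univ_three]
  -- the right-hand side constant
  set K : ℝ := 2 ^ (((d : ℝ) + 1)/4) * (∏ k, (n k : ℝ)) ^ (-(1 : ℝ)/4) with hK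
  have hfrobpos : 0 < frobNorm T := by
    rw [hTfrob]
    apply Real.sqrt_pos.mpr
    exact_mod_cast hM1
  have hone : 1 ≤ K * frobNorm T := by
    rw [hK, hTfrob, hcast]
    have hNpos : (0:ℝ) < (N:ℝ) := by exact_mod_cast hN1
    have hMpos : (0:ℝ) < (M:ℝ) := by exact_mod_cast hM1
    have hkeyR : (N:ℝ) ≤ 2^(d+1) * (M:ℝ)^2 := by exact_mod_cast hkey
    -- N^(1/4) ≤ 2^((d+1)/4) * M^(1/2)
    have h4 : (N:ℝ) ^ ((1:ℝ)/4) ≤ (2^(d+1) * (M:ℝ)^2) ^ ((1:ℝ)/4) :=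
      Real.rpow_le_rpow (le_of_lt hNpos) hkeyR (by norm_num)
    have h5 : ((2:ℝ)^(d+1) * (M:ℝ)^2) ^ ((1:ℝ)/4)
        = 2 ^ (((d:ℝ)+1)/4) * (M:ℝ) ^ ((1:ℝ)/2) := by
      rw [Real.mul_rpow (by positivity) (by positivity)]
      congr 1
      · rw [← Real.rpow_natCast 2 (d+1), ← Real.rpow_mul (by norm_num)]
        congr 1
        push_cast
        ring
      · rw [← Real.rpow_natCast (M:ℝ) 2, ← Real.rpow_mul (le_of_lt hMpos)]
        norm_num
    have h6 : (N:ℝ) ^ ((1:ℝ)/4) ≤ 2 ^ (((d:ℝ)+1)/4) * (M:ℝ) ^ ((1:ℝ)/2) := by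
      rw [← h5]; exact h4
    have h7 : Real.sqrt (M:ℝ) = (M:ℝ) ^ ((1:ℝ)/2) := Real.sqrt_eq_rpow _
    have h8 : (N:ℝ) ^ (-(1:ℝ)/4) = ((N:ℝ) ^ ((1:ℝ)/4))⁻¹ := by
      rw [show -(1:ℝ)/4 = -((1:ℝ)/4) by ring, Real.rpow_neg (le_of_lt hNpos)]
    rw [h7, h8]
    have hN4pos : 0 < (N:ℝ) ^ ((1:ℝ)/4) := Real.rpow_pos_of_pos hNpos _
    rw [show (2:ℝ) ^ (((d:ℝ)+1)/4) * ((N:ℝ) ^ ((1:ℝ)/4))⁻¹ * (M:ℝ) ^ ((1:ℝ)/2)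
      = (2 ^ (((d:ℝ)+1)/4) * (M:ℝ) ^ ((1:ℝ)/2)) / ((N:ℝ) ^ ((1:ℝ)/4)) by ring]
    rw [le_div_iff₀ hN4pos, one_mul]
    exact h6
  have hKpos : 0 < K := by
    have := hone
    nlinarith [hfrobpos, specNorm_nonneg T]
  constructor
  · calc phiPos n ≤ specNorm T / frobNorm T := phiPos_le T hTne hTpos
    _ ≤ K := by
        rw [div_le_iff₀ hfrobpos]
        nlinarith [hTspec, hone, hfrobpos, specNorm_nonneg T]
  · refine ⟨T, hTne, hTpos, ?_⟩
    calc specNorm T ≤ 1 := hTspec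
    _ ≤ K * frobNorm T := hone

end
end

section
/- Let d ≥ 1 and n_1, …, n_d ≥ 2 be integers. Then ψ(n_1, …, n_d) ≤ ψ_+(n_1, …, n_d) ≤ √2 · ψ(n_1, …, n_d). Moreover, for every n ≥ 2, ψ_sym(n^d) ≤ ψ_{+,sym}(n^d) ≤ √2 · ψ_sym(n^d). -/
noncomputable section

/-- Nuclear norm: infimum of `∑ |λ_i|` over rank-one decompositions with unit vectors. -/
def nucNorm {d : ℕ} {n : Fin d → ℕ} (T : (∀ k, Fin (n k)) → ℝ) : ℝ :=
  sInf { s : ℝ | ∃ (r : ℕ) (lam : Fin r → ℝ)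
    (x : Fin r → ∀ k, EuclideanSpace ℝ (Fin (n k))),
    (∀ i k, ‖x i k‖ = 1) ∧ (∀ j, T j = ∑ i, lam i * ∏ k, x i k (j k)) ∧
    s = ∑ i, |lam i| }

/-- `ψ(n_1,…,n_d)`: infimum of `‖T‖/‖T‖_*` over nonzero real tensors. -/
def psi {d : ℕ} (n : Fin d → ℕ) : ℝ :=
  sInf { r : ℝ | ∃ T : (∀ k, Fin (n k)) → ℝ, T ≠ 0 ∧ r = frobNorm T / nucNorm T }

/-- `ψ_+(n_1,…,n_d)`: infimum of `‖T‖/‖T‖_*` over nonzero nonnegative tensors. -/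
def psiPos {d : ℕ} (n : Fin d → ℕ) : ℝ :=
  sInf { r : ℝ | ∃ T : (∀ k, Fin (n k)) → ℝ,
    T ≠ 0 ∧ (∀ i, 0 ≤ T i) ∧ r = frobNorm T / nucNorm T }

/-- `ψ_sym(n^d)`: infimum of `‖T‖/‖T‖_*` over nonzero symmetric tensors. -/
def psiSym (d n : ℕ) : ℝ :=
  sInf { r : ℝ | ∃ T : (Fin d → Fin n) → ℝ, T ≠ 0 ∧
    (∀ (π : Equiv.Perm (Fin d)) (i : Fin d → Fin n), T (i ∘ π) = T i) ∧
    r = frobNorm (n := fun _ : Fin d => n) T / nucNorm (n := fun _ : Fin d => n) T }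

/-- `ψ_{+,sym}(n^d)`: infimum of `‖T‖/‖T‖_*` over nonzero nonnegative symmetric tensors. -/
def psiPosSym (d n : ℕ) : ℝ :=
  sInf { r : ℝ | ∃ T : (Fin d → Fin n) → ℝ, T ≠ 0 ∧ (∀ i, 0 ≤ T i) ∧
    (∀ (π : Equiv.Perm (Fin d)) (i : Fin d → Fin n), T (i ∘ π) = T i) ∧
    r = frobNorm (n := fun _ : Fin d => n) T / nucNorm (n := fun _ : Fin d => n) T }

namespace Stmt18Aux

variable {d : ℕ} {n : Fin d → ℕ}

def dset (T : (∀ k, Fin (n k)) → ℝ) : Set ℝ :=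
  { s : ℝ | ∃ (r : ℕ) (lam : Fin r → ℝ)
    (x : Fin r → ∀ k, EuclideanSpace ℝ (Fin (n k))),
    (∀ i k, ‖x i k‖ = 1) ∧ (∀ j, T j = ∑ i, lam i * ∏ k, x i k (j k)) ∧
    s = ∑ i, |lam i| }

lemma nucNorm_eq (T : (∀ k, Fin (n k)) → ℝ) : nucNorm T = sInf (dset T) := rfl

lemma dset_nonneg {T : (∀ k, Fin (n k)) → ℝ} {s : ℝ} (hs : s ∈ dset T) : 0 ≤ s := by
  obtain ⟨r, lam, x, -, -, rfl⟩ := hs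
  exact Finset.sum_nonneg fun i _ => abs_nonneg _

lemma dset_bddBelow (T : (∀ k, Fin (n k)) → ℝ) : BddBelow (dset T) :=
  ⟨0, fun s hs => dset_nonneg hs⟩

lemma nuc_nonneg (T : (∀ k, Fin (n k)) → ℝ) : 0 ≤ nucNorm T :=
  Real.sInf_nonneg fun _ hs => dset_nonneg hs

lemma frob_nonneg (T : (∀ k, Fin (n k)) → ℝ) : 0 ≤ frobNorm T := Real.sqrt_nonneg _

lemma frob_sq (T : (∀ k, Fin (n k)) → ℝ) : frobNorm T ^ 2 = ∑ i, T i ^ 2 :=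
  Real.sq_sqrt (Finset.sum_nonneg fun i _ => sq_nonneg _)

lemma frob_pos {T : (∀ k, Fin (n k)) → ℝ} (h : T ≠ 0) : 0 < frobNorm T := by
  rcases Function.ne_iff.mp h with ⟨i, hi⟩
  apply Real.sqrt_pos.mpr
  have h1 : (0:ℝ) < T i ^ 2 := by
    have : T i ≠ 0 := hi
    positivity
  exact lt_of_lt_of_le h1
    (Finset.single_le_sum (fun j _ => sq_nonneg (T j)) (Finset.mem_univ i))

lemma frob_zero : frobNorm (0 : (∀ k, Fin (n k)) → ℝ) = 0 := by
  simp [frobNorm]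

lemma dset_nonempty (hn1 : ∀ k, 1 ≤ n k) (T : (∀ k, Fin (n k)) → ℝ) :
    (dset T).Nonempty := by
  classical
  haveI : Nonempty (∀ k, Fin (n k)) := ⟨fun k => ⟨0, hn1 k⟩⟩
  let e := (Fintype.equivFin (∀ k, Fin (n k))).symm
  refine ⟨∑ i, |T (e i)|, Fintype.card (∀ k, Fin (n k)), fun i => T (e i),
    fun i k => EuclideanSpace.single (e i k) 1, fun i k => ?_, fun j => ?_, rfl⟩
  · simp [EuclideanSpace.norm_single]
  · have key : ∀ p : (∀ k, Fin (n k)),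
        (∏ k, (EuclideanSpace.single (p k) (1:ℝ)) (j k)) = if j = p then 1 else 0 := by
      intro p
      simp only [EuclideanSpace.single_apply]
      rw [Finset.prod_boole]
      simp [funext_iff]
    have key2 : ∀ p : (∀ k, Fin (n k)),
        T p * ∏ k, (EuclideanSpace.single (p k) (1:ℝ)) (j k) = if j = p then T p else 0 := by
      intro p; rw [key p]; split <;> simp
    calc T j = ∑ p : (∀ k, Fin (n k)),
          T p * ∏ k, (EuclideanSpace.single (p k) (1:ℝ)) (j k) := by
          rw [Finset.sum_congr rfl fun p _ => key2 p, Finset.sum_ite_eq]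
          simp
      _ = ∑ i, T (e i) * ∏ k, (EuclideanSpace.single (e i k) (1:ℝ)) (j k) :=
          (Equiv.sum_comp e _).symm

lemma frob_eq_norm (S : (∀ k, Fin (n k)) → ℝ) :
    frobNorm S = ‖(WithLp.linearEquiv 2 ℝ ((∀ k, Fin (n k)) → ℝ)).symm S‖ := by
  rw [EuclideanSpace.norm_eq]
  unfold frobNorm
  congr 1
  apply Finset.sum_congr rfl
  intro i _
  rw [WithLp.linearEquiv_symm_apply]
  change S i ^ 2 = ‖S i‖ ^ 2
  rw [Real.norm_eq_abs, sq_abs]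

lemma rankone_frob (x : ∀ k, EuclideanSpace ℝ (Fin (n k))) (hx : ∀ k, ‖x k‖ = 1) :
    frobNorm (fun j : ∀ k, Fin (n k) => ∏ k, x k (j k)) = 1 := by
  classical
  have h1 : ∀ k, ∑ t, (x k t) ^ 2 = 1 := by
    intro k
    have h := hx k
    rw [EuclideanSpace.norm_eq, Real.sqrt_eq_one] at h
    calc ∑ t, (x k t) ^ 2 = ∑ t, ‖x k t‖ ^ 2 := by
          simp [Real.norm_eq_abs, sq_abs]
      _ = 1 := h
  unfold frobNorm
  have h2 : ∑ j : ∀ k, Fin (n k), (∏ k, x k (j k)) ^ 2 = 1 := by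
    have := Fintype.prod_sum (fun k (t : Fin (n k)) => (x k t) ^ 2)
    calc ∑ j : ∀ k, Fin (n k), (∏ k, x k (j k)) ^ 2
        = ∑ j : ∀ k, Fin (n k), ∏ k, (x k (j k)) ^ 2 := by
          simp only [← Finset.prod_pow]
      _ = ∏ k, ∑ t, (x k t) ^ 2 := this.symm
      _ = 1 := by simp [h1]
  rw [h2, Real.sqrt_one]

lemma frob_le_sum {r : ℕ} (lam : Fin r → ℝ)
    (x : Fin r → ∀ k, EuclideanSpace ℝ (Fin (n k)))
    (hx : ∀ i k, ‖x i k‖ = 1) (T : (∀ k, Fin (n k)) → ℝ)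
    (hT : ∀ j, T j = ∑ i, lam i * ∏ k, x i k (j k)) :
    frobNorm T ≤ ∑ i, |lam i| := by
  classical
  set L := (WithLp.linearEquiv 2 ℝ ((∀ k, Fin (n k)) → ℝ)).symm with hL
  have hsum : T = ∑ i, lam i • (fun j : ∀ k, Fin (n k) => ∏ k, x i k (j k)) := by
    funext j
    rw [hT j]
    simp [Finset.sum_apply]
  have hmap : L T = ∑ i, lam i • L (fun j : ∀ k, Fin (n k) => ∏ k, x i k (j k)) := by
    rw [hsum, map_sum]
    simp
  calc frobNorm T = ‖L T‖ := frob_eq_norm T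
    _ ≤ ∑ i, ‖lam i • L (fun j : ∀ k, Fin (n k) => ∏ k, x i k (j k))‖ := by
        rw [hmap]; exact norm_sum_le _ _
    _ = ∑ i, |lam i| := by
        apply Finset.sum_congr rfl
        intro i _
        rw [norm_smul, Real.norm_eq_abs, ← frob_eq_norm, rankone_frob (x i) (hx i), mul_one]

lemma frob_le_nuc (hn1 : ∀ k, 1 ≤ n k) (T : (∀ k, Fin (n k)) → ℝ) :
    frobNorm T ≤ nucNorm T := by
  rw [nucNorm_eq]
  refine le_csInf (dset_nonempty hn1 T) ?_
  rintro s ⟨r, lam, x, hx, hT, rfl⟩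
  exact frob_le_sum lam x hx T hT

lemma nuc_zero : nucNorm (0 : (∀ k, Fin (n k)) → ℝ) = 0 := by
  refine le_antisymm ?_ (nuc_nonneg 0)
  rw [nucNorm_eq]
  refine csInf_le (dset_bddBelow 0) ?_
  exact ⟨0, fun i => i.elim0, fun i => i.elim0, fun i => i.elim0, fun j => by simp, by simp⟩

lemma nuc_le_add (hn1 : ∀ k, 1 ≤ n k) (T A B : (∀ k, Fin (n k)) → ℝ)
    (hT : ∀ j, T j = A j - B j) : nucNorm T ≤ nucNorm A + nucNorm B := by
  classical
  have key : ∀ s ∈ dset A, ∀ t ∈ dset B, nucNorm T ≤ s + t := by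
    rintro s ⟨r₁, l₁, x₁, hx₁, hA, rfl⟩ t ⟨r₂, l₂, x₂, hx₂, hB, rfl⟩
    rw [nucNorm_eq]
    refine csInf_le (dset_bddBelow T)
      ⟨r₁ + r₂, Fin.addCases l₁ (fun i => -(l₂ i)), Fin.addCases x₁ x₂, ?_, ?_, ?_⟩
    · intro i k
      induction i using Fin.addCases with
      | left i => simp [hx₁ i k]
      | right i => simp [hx₂ i k]
    · intro j
      rw [Fin.sum_univ_add]
      simp only [Fin.addCases_left, Fin.addCases_right, neg_mul]
      rw [Finset.sum_neg_distrib, ← hA j, ← hB j, ← sub_eq_add_neg]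
      exact hT j
    · rw [Fin.sum_univ_add]
      simp only [Fin.addCases_left, Fin.addCases_right, abs_neg]
  have h1 : nucNorm T - nucNorm B ≤ nucNorm A := by
    rw [nucNorm_eq A]
    refine le_csInf (dset_nonempty hn1 A) ?_
    intro s hs
    have h2 : nucNorm T - s ≤ nucNorm B := by
      rw [nucNorm_eq B]
      refine le_csInf (dset_nonempty hn1 B) ?_
      intro t ht
      linarith [key s hs t ht]
    linarith
  linarith

lemma exists_nonneg (hn1 : ∀ k, 1 ≤ n k) {T : (∀ k, Fin (n k)) → ℝ} (hT : T ≠ 0) :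
    ∃ S : (∀ k, Fin (n k)) → ℝ,
      (S = (fun i => max (T i) 0) ∨ S = (fun i => max (-(T i)) 0)) ∧ S ≠ 0 ∧
      (∀ i, 0 ≤ S i) ∧
      frobNorm S / nucNorm S ≤ Real.sqrt 2 * (frobNorm T / nucNorm T) := by
  classical
  set A : (∀ k, Fin (n k)) → ℝ := fun i => max (T i) 0 with hAdef
  set B : (∀ k, Fin (n k)) → ℝ := fun i => max (-(T i)) 0 with hBdef
  have hTab : ∀ j, T j = A j - B j := fun j =>
    (max_zero_sub_max_neg_zero_eq_self (T j)).symm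
  have hApos : ∀ i, 0 ≤ A i := fun i => le_max_right _ _
  have hBpos : ∀ i, 0 ≤ B i := fun i => le_max_right _ _
  have hF : 0 < frobNorm T := frob_pos hT
  have hN : 0 < nucNorm T := lt_of_lt_of_le hF (frob_le_nuc hn1 T)
  have hNxy : nucNorm T ≤ nucNorm A + nucNorm B := nuc_le_add hn1 T A B hTab
  have hsq : frobNorm A ^ 2 + frobNorm B ^ 2 = frobNorm T ^ 2 := by
    rw [frob_sq, frob_sq, frob_sq, ← Finset.sum_add_distrib]
    apply Finset.sum_congr rfl
    intro i _
    rcases le_total (T i) 0 with h | h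
    · simp [hAdef, hBdef, max_eq_right h, max_eq_left (neg_nonneg.mpr h)]
    · simp [hAdef, hBdef, max_eq_left h, max_eq_right (neg_nonpos.mpr h)]
  have hone_le : (1:ℝ) ≤ Real.sqrt 2 := by
    rw [show (1:ℝ) = Real.sqrt 1 by simp]
    exact Real.sqrt_le_sqrt (by norm_num)
  have hratio_nonneg : 0 ≤ frobNorm T / nucNorm T := div_nonneg hF.le hN.le
  by_cases hA0 : A = 0
  · -- S = B
    have hB0 : B ≠ 0 := by
      intro h
      apply hT
      funext j
      rw [hTab j, hA0, h]
      simp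
    have ha : frobNorm A = 0 := by rw [hA0]; exact frob_zero
    have hx : nucNorm A = 0 := by rw [hA0]; exact nuc_zero
    have hbF : frobNorm B = frobNorm T := by
      have : frobNorm B ^ 2 = frobNorm T ^ 2 := by rw [← hsq, ha]; ring
      rw [← Real.sqrt_sq (frob_nonneg B), this, Real.sqrt_sq hF.le]
    have hy : nucNorm T ≤ nucNorm B := by linarith
    refine ⟨B, Or.inr rfl, hB0, hBpos, ?_⟩
    rw [hbF]
    calc frobNorm T / nucNorm B ≤ frobNorm T / nucNorm T :=
          div_le_div_of_nonneg_left hF.le hN hy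
      _ ≤ Real.sqrt 2 * (frobNorm T / nucNorm T) :=
          le_mul_of_one_le_left hratio_nonneg hone_le
  · by_cases hB0 : B = 0
    · -- S = A = T
      have hAT : A = T := by
        funext j
        have := hTab j
        rw [hB0] at this
        simpa using this.symm
      refine ⟨A, Or.inl rfl, hAT ▸ hT, hApos, ?_⟩
      rw [hAT]
      exact le_mul_of_one_le_left hratio_nonneg hone_le
    · -- both nonzero
      have ha : 0 < frobNorm A := frob_pos hA0
      have hb : 0 < frobNorm B := frob_pos hB0
      have hx : 0 < nucNorm A := lt_of_lt_of_le ha (frob_le_nuc hn1 A)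
      have hy : 0 < nucNorm B := lt_of_lt_of_le hb (frob_le_nuc hn1 B)
      have habF : frobNorm A + frobNorm B ≤ Real.sqrt 2 * frobNorm T := by
        have h2 : (frobNorm A + frobNorm B) ^ 2 ≤ (Real.sqrt 2 * frobNorm T) ^ 2 := by
          rw [mul_pow, Real.sq_sqrt (by norm_num : (0:ℝ) ≤ 2)]
          nlinarith [sq_nonneg (frobNorm A - frobNorm B)]
        have h3 := Real.sqrt_le_sqrt h2
        rwa [Real.sqrt_sq (by positivity), Real.sqrt_sq (by positivity)] at h3
      have hmed : (frobNorm A + frobNorm B) / (nucNorm A + nucNorm B) ≤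
          Real.sqrt 2 * (frobNorm T / nucNorm T) := by
        rw [← mul_div_assoc]
        exact div_le_div₀ (by positivity) habF hN hNxy
      by_cases hcase : frobNorm A / nucNorm A ≤ frobNorm B / nucNorm B
      · refine ⟨A, Or.inl rfl, hA0, hApos, ?_⟩
        have hcross : frobNorm A * nucNorm B ≤ frobNorm B * nucNorm A :=
          (div_le_div_iff₀ hx hy).mp hcase
        have h1 : frobNorm A / nucNorm A ≤
            (frobNorm A + frobNorm B) / (nucNorm A + nucNorm B) := by
          rw [div_le_div_iff₀ hx (by positivity)]
          nlinarith
        linarith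
      · refine ⟨B, Or.inr rfl, hB0, hBpos, ?_⟩
        have hcase' : frobNorm B / nucNorm B ≤ frobNorm A / nucNorm A :=
          (not_le.mp hcase).le
        have hcross : frobNorm B * nucNorm A ≤ frobNorm A * nucNorm B :=
          (div_le_div_iff₀ hy hx).mp hcase'
        have h1 : frobNorm B / nucNorm B ≤
            (frobNorm A + frobNorm B) / (nucNorm A + nucNorm B) := by
          rw [div_le_div_iff₀ hy (by positivity)]
          nlinarith
        linarith

lemma psi_pair (hn1 : ∀ k, 1 ≤ n k) (P : ((∀ k, Fin (n k)) → ℝ) → Prop)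
    (hPpos : ∀ T, P T → P (fun i => max (T i) 0))
    (hPneg : ∀ T, P T → P (fun i => max (-(T i)) 0))
    (hone : P (fun _ => 1)) :
    sInf {r | ∃ T, T ≠ 0 ∧ P T ∧ r = frobNorm T / nucNorm T} ≤
        sInf {r | ∃ T, T ≠ 0 ∧ (∀ i, 0 ≤ T i) ∧ P T ∧ r = frobNorm T / nucNorm T} ∧
      sInf {r | ∃ T, T ≠ 0 ∧ (∀ i, 0 ≤ T i) ∧ P T ∧ r = frobNorm T / nucNorm T} ≤
        Real.sqrt 2 * sInf {r | ∃ T, T ≠ 0 ∧ P T ∧ r = frobNorm T / nucNorm T} := by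
  haveI hne : Nonempty (∀ k, Fin (n k)) := ⟨fun k => ⟨0, hn1 k⟩⟩
  set Sall := {r | ∃ T, T ≠ 0 ∧ P T ∧ r = frobNorm T / nucNorm T} with hSall
  set Spos := {r | ∃ T, T ≠ 0 ∧ (∀ i, 0 ≤ T i) ∧ P T ∧ r = frobNorm T / nucNorm T}
    with hSpos
  have hone_ne : (fun _ : (∀ k, Fin (n k)) => (1:ℝ)) ≠ 0 := by
    intro h
    exact one_ne_zero (congrFun h (Classical.arbitrary _))
  have hpos_ne : Spos.Nonempty :=
    ⟨_, ⟨fun _ => 1, hone_ne, fun i => zero_le_one, hone, rfl⟩⟩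
  have hall_ne : Sall.Nonempty := ⟨_, ⟨fun _ => 1, hone_ne, hone, rfl⟩⟩
  have hbdd_all : BddBelow Sall := by
    refine ⟨0, ?_⟩
    rintro r ⟨T, -, -, rfl⟩
    exact div_nonneg (frob_nonneg T) (nuc_nonneg T)
  have hbdd_pos : BddBelow Spos := by
    refine ⟨0, ?_⟩
    rintro r ⟨T, -, -, -, rfl⟩
    exact div_nonneg (frob_nonneg T) (nuc_nonneg T)
  constructor
  · exact csInf_le_csInf hbdd_all hpos_ne fun r ⟨T, h1, _, h3, h4⟩ => ⟨T, h1, h3, h4⟩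
  · have step : ∀ r ∈ Sall, sInf Spos ≤ Real.sqrt 2 * r := by
      rintro r ⟨T, hT0, hTP, rfl⟩
      obtain ⟨S, hSor, hS0, hSposi, hSle⟩ := exists_nonneg hn1 hT0
      have hSP : P S := by
        rcases hSor with rfl | rfl
        exacts [hPpos T hTP, hPneg T hTP]
      exact le_trans (csInf_le hbdd_pos ⟨S, hS0, hSposi, hSP, rfl⟩) hSle
    have hs2 : (0:ℝ) < Real.sqrt 2 := by positivity
    have h2 : sInf Spos / Real.sqrt 2 ≤ sInf Sall := by
      refine le_csInf hall_ne ?_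
      intro r hr
      rw [div_le_iff₀ hs2]
      calc sInf Spos ≤ Real.sqrt 2 * r := step r hr
        _ = r * Real.sqrt 2 := mul_comm _ _
    calc sInf Spos = sInf Spos / Real.sqrt 2 * Real.sqrt 2 := by field_simp
      _ ≤ sInf Sall * Real.sqrt 2 := mul_le_mul_of_nonneg_right h2 hs2.le
      _ = Real.sqrt 2 * sInf Sall := mul_comm _ _

end Stmt18Aux

theorem stmt_18 {d : ℕ} (hd : 1 ≤ d) (n : Fin d → ℕ) (hn : ∀ k, 2 ≤ n k)
    (m : ℕ) (hm : 2 ≤ m) :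
    (psi n ≤ psiPos n ∧ psiPos n ≤ Real.sqrt 2 * psi n) ∧
    (psiSym d m ≤ psiPosSym d m ∧ psiPosSym d m ≤ Real.sqrt 2 * psiSym d m) := by
  have hn1 : ∀ k, 1 ≤ n k := fun k => le_trans one_le_two (hn k)
  constructor
  · have h := Stmt18Aux.psi_pair (n := n) hn1 (fun _ => True)
      (fun _ _ => trivial) (fun _ _ => trivial) trivial
    have e1 : psi n = sInf {r | ∃ T : (∀ k, Fin (n k)) → ℝ,
        T ≠ 0 ∧ (fun _ => True) T ∧ r = frobNorm T / nucNorm T} := by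
      unfold psi
      congr 1
      ext r
      simp
    have e2 : psiPos n = sInf {r | ∃ T : (∀ k, Fin (n k)) → ℝ,
        T ≠ 0 ∧ (∀ i, 0 ≤ T i) ∧ (fun _ => True) T ∧ r = frobNorm T / nucNorm T} := by
      unfold psiPos
      congr 1
      ext r
      simp
    rw [e1, e2]
    exact h
  · have hm1 : ∀ k : Fin d, 1 ≤ (fun _ : Fin d => m) k :=
      fun k => le_trans one_le_two hm
    have h := Stmt18Aux.psi_pair (n := fun _ : Fin d => m) hm1
      (fun T => ∀ (π : Equiv.Perm (Fin d)) (i : Fin d → Fin m), T (i ∘ π) = T i)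
      (fun T hT π i => by
        show max (T (i ∘ π)) 0 = max (T i) 0
        rw [hT π i])
      (fun T hT π i => by
        show max (-(T (i ∘ π))) 0 = max (-(T i)) 0
        rw [hT π i])
      (fun π i => rfl)
    exact h
end
end

section
/- For every nonnegative real tensor T of order d with dimensions n_1, …, n_d, the complex spectral norm of T (viewing T as a complex tensor) equals its real spectral norm ‖T‖_σ, and this common value also equals the supremum of ⟨T, x¹⊗⋯⊗x^d⟩ over tuples of unit vectors x^k ∈ ℝ^{n_k} with all entries nonnegative. Consequently, φ_ℂ(n_1, …, n_d) ≤ φ_+(n_1, …, n_d), where φ_ℂ(n_1, …, n_d) denotes the infimum of (complex spectral norm)/(Frobenius norm) over all nonzero complex tensors of order d with dimensions n_1, …, n_d. -/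
noncomputable section

/-- Frobenius norm of a complex tensor. -/
def cFrobNorm {d : ℕ} {n : Fin d → ℕ} (T : (∀ k, Fin (n k)) → ℂ) : ℝ :=
  Real.sqrt (∑ i, ‖T i‖ ^ 2)

/-- Complex spectral norm: supremum of `|⟨T, x¹⊗⋯⊗x^d⟩|` over tuples of complex
unit vectors. -/
def cSpecNorm {d : ℕ} {n : Fin d → ℕ} (T : (∀ k, Fin (n k)) → ℂ) : ℝ :=
  sSup { r : ℝ | ∃ x : ∀ k, EuclideanSpace ℂ (Fin (n k)),
    (∀ k, ‖x k‖ = 1) ∧ r = ‖∑ i, T i * ∏ k, x k (i k)‖ }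

/-- `φ_ℂ(n_1,…,n_d)`: infimum of (complex spectral norm)/(Frobenius norm) over
nonzero complex tensors. -/
def phiC {d : ℕ} (n : Fin d → ℕ) : ℝ :=
  sInf { r : ℝ | ∃ T : (∀ k, Fin (n k)) → ℂ, T ≠ 0 ∧ r = cSpecNorm T / cFrobNorm T }

private lemma coord_le_norm {𝕜 : Type*} [RCLike 𝕜] {m : ℕ}
    (x : EuclideanSpace 𝕜 (Fin m)) (j : Fin m) : ‖x j‖ ≤ ‖x‖ := by
  rw [EuclideanSpace.norm_eq]
  rw [Real.le_sqrt (norm_nonneg _) (by positivity)]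
  exact Finset.single_le_sum (f := fun i => ‖x i‖ ^ 2)
    (fun i _ => by positivity) (Finset.mem_univ j)

private lemma prod_coord_le_one {𝕜 : Type*} [RCLike 𝕜] {d : ℕ} {n : Fin d → ℕ}
    (x : ∀ k, EuclideanSpace 𝕜 (Fin (n k))) (hx : ∀ k, ‖x k‖ = 1)
    (i : ∀ k, Fin (n k)) : ∏ k, ‖x k (i k)‖ ≤ 1 := by
  apply Finset.prod_le_one (fun k _ => norm_nonneg _)
  intro k _
  rw [← hx k]; exact coord_le_norm _ _

private lemma cBound {d : ℕ} {n : Fin d → ℕ} (S : (∀ k, Fin (n k)) → ℂ)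
    (x : ∀ k, EuclideanSpace ℂ (Fin (n k))) (hx : ∀ k, ‖x k‖ = 1) :
    ‖∑ i, S i * ∏ k, x k (i k)‖ ≤ ∑ i, ‖S i‖ := by
  refine (norm_sum_le _ _).trans ?_
  apply Finset.sum_le_sum
  intro i _
  rw [norm_mul]
  calc ‖S i‖ * ‖∏ k, x k (i k)‖ ≤ ‖S i‖ * 1 := by
        apply mul_le_mul_of_nonneg_left _ (norm_nonneg _)
        rw [norm_prod]
        exact prod_coord_le_one x hx i
    _ = ‖S i‖ := mul_one _

private lemma unit_exists {𝕜 : Type*} [RCLike 𝕜] {d : ℕ} {n : Fin d → ℕ}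
    (hn : ∀ k, 0 < n k) :
    ∃ x : ∀ k, EuclideanSpace 𝕜 (Fin (n k)),
      (∀ k, ‖x k‖ = 1) ∧ (∀ k j, x k j = if j = ⟨0, hn k⟩ then 1 else 0) := by
  refine ⟨fun k => EuclideanSpace.single ⟨0, hn k⟩ (1 : 𝕜), fun k => ?_, fun k j => ?_⟩
  · rw [EuclideanSpace.norm_single, norm_one]
  · show EuclideanSpace.single ⟨0, hn k⟩ (1 : 𝕜) j = _
    rw [EuclideanSpace.single_apply]

private lemma main_eq {d : ℕ} {n : Fin d → ℕ} (hn : ∀ k, 0 < n k)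
    (T : (∀ k, Fin (n k)) → ℝ) (hTnn : ∀ i, 0 ≤ T i) :
    cSpecNorm (fun i => (T i : ℂ)) = specNorm T ∧
    specNorm T = sSup { r : ℝ | ∃ x : ∀ k, EuclideanSpace ℝ (Fin (n k)),
      (∀ k, ‖x k‖ = 1) ∧ (∀ k j, 0 ≤ x k j) ∧ r = ∑ i, T i * ∏ k, x k (i k) } := by
  set Sc := { r : ℝ | ∃ x : ∀ k, EuclideanSpace ℂ (Fin (n k)),
    (∀ k, ‖x k‖ = 1) ∧ r = ‖∑ i, (T i : ℂ) * ∏ k, x k (i k)‖ } with hSc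
  set Sr := { r : ℝ | ∃ x : ∀ k, EuclideanSpace ℝ (Fin (n k)),
    (∀ k, ‖x k‖ = 1) ∧ r = |∑ i, T i * ∏ k, x k (i k)| } with hSr
  set Sp := { r : ℝ | ∃ x : ∀ k, EuclideanSpace ℝ (Fin (n k)),
    (∀ k, ‖x k‖ = 1) ∧ (∀ k j, 0 ≤ x k j) ∧ r = ∑ i, T i * ∏ k, x k (i k) } with hSp
  -- bounded above
  have habs : ∀ i, ‖((T i : ℂ))‖ = T i := fun i => by
    rw [Complex.norm_real, Real.norm_eq_abs, abs_of_nonneg (hTnn i)]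
  have hbddc : BddAbove Sc := by
    refine ⟨∑ i, T i, fun r hr => ?_⟩
    obtain ⟨x, hx, rfl⟩ := hr
    calc ‖∑ i, (T i : ℂ) * ∏ k, x k (i k)‖
        ≤ ∑ i, ‖((T i : ℂ))‖ := cBound _ x hx
      _ = ∑ i, T i := by simp_rw [habs]
  -- Sp ⊆ Sr
  have hsub1 : Sp ⊆ Sr := by
    rintro r ⟨x, hx, hxnn, rfl⟩
    refine ⟨x, hx, ?_⟩
    rw [abs_of_nonneg]
    apply Finset.sum_nonneg
    intro i _
    exact mul_nonneg (hTnn i) (Finset.prod_nonneg fun k _ => hxnn k (i k))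
  -- Sr ⊆ Sc
  have hsub2 : Sr ⊆ Sc := by
    rintro r ⟨x, hx, rfl⟩
    refine ⟨fun k => WithLp.toLp 2 (fun j => ((x k j : ℝ) : ℂ)), fun k => ?_, ?_⟩
    · rw [EuclideanSpace.norm_eq, ← hx k, EuclideanSpace.norm_eq]
      congr 1; apply Finset.sum_congr rfl; intro j _
      rw [PiLp.toLp_apply, Complex.norm_real]
    · simp only [PiLp.toLp_apply]
      rw [show (∑ i, (T i : ℂ) * ∏ k, ((x k (i k) : ℝ) : ℂ))
          = ((∑ i, T i * ∏ k, x k (i k) : ℝ) : ℂ) by push_cast; ring_nf]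
      rw [Complex.norm_real, Real.norm_eq_abs]
  -- Sp nonempty
  have hSpne : Sp.Nonempty := by
    obtain ⟨x, hx1, hx2⟩ := unit_exists (𝕜 := ℝ) hn
    exact ⟨_, x, hx1, fun k j => by rw [hx2 k j]; positivity, rfl⟩
  -- every element of Sc is dominated by an element of Sp
  have hdom : ∀ r ∈ Sc, ∃ s ∈ Sp, r ≤ s := by
    rintro r ⟨x, hx, rfl⟩
    set y : ∀ k, EuclideanSpace ℝ (Fin (n k)) :=
      fun k => WithLp.toLp 2 (fun j => ‖x k j‖) with hy
    have hynorm : ∀ k, ‖y k‖ = 1 := by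
      intro k
      rw [EuclideanSpace.norm_eq, ← hx k, EuclideanSpace.norm_eq]
      congr 1; apply Finset.sum_congr rfl; intro j _
      rw [hy]
      simp [Real.norm_eq_abs, abs_of_nonneg (norm_nonneg _)]
    refine ⟨∑ i, T i * ∏ k, y k (i k),
      ⟨y, hynorm, fun k j => norm_nonneg _, rfl⟩, ?_⟩
    refine (norm_sum_le _ _).trans ?_
    apply Finset.sum_le_sum
    intro i _
    rw [norm_mul, norm_prod, Complex.norm_real, Real.norm_eq_abs,
      abs_of_nonneg (hTnn i)]
  have hbddr : BddAbove Sr := hbddc.mono hsub2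
  have hbddp : BddAbove Sp := hbddr.mono hsub1
  have hScne : Sc.Nonempty := ⟨_, hsub2 (hsub1 hSpne.choose_spec)⟩
  have h1 : sSup Sp ≤ sSup Sr := csSup_le_csSup hbddr hSpne hsub1
  have h2 : sSup Sr ≤ sSup Sc :=
    csSup_le_csSup hbddc (hSpne.mono hsub1) hsub2
  have h3 : sSup Sc ≤ sSup Sp := by
    apply csSup_le hScne
    intro r hr
    obtain ⟨s, hs, hrs⟩ := hdom r hr
    exact hrs.trans (le_csSup hbddp hs)
  constructor
  · exact le_antisymm (h3.trans h1) h2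
  · exact le_antisymm (h2.trans h3) h1

theorem stmt_19 {d : ℕ} (n : Fin d → ℕ) (hn : ∀ k, 0 < n k)
    (T : (∀ k, Fin (n k)) → ℝ) (hTnn : ∀ i, 0 ≤ T i) :
    cSpecNorm (fun i => (T i : ℂ)) = specNorm T ∧
    specNorm T = sSup { r : ℝ | ∃ x : ∀ k, EuclideanSpace ℝ (Fin (n k)),
      (∀ k, ‖x k‖ = 1) ∧ (∀ k j, 0 ≤ x k j) ∧ r = ∑ i, T i * ∏ k, x k (i k) } ∧
    phiC n ≤ phiPos n := by
  obtain ⟨h1, h2⟩ := main_eq hn T hTnn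
  refine ⟨h1, h2, ?_⟩
  have hidx : ∀ k, Fin (n k) := fun k => ⟨0, hn k⟩
  -- subset
  apply csInf_le_csInf
  · -- bddBelow of phiC set by 0
    refine ⟨0, fun r hr => ?_⟩
    obtain ⟨S, _, rfl⟩ := hr
    apply div_nonneg _ (Real.sqrt_nonneg _)
    obtain ⟨x, hx1, _⟩ := unit_exists (𝕜 := ℂ) hn
    have hmem : ‖∑ i, S i * ∏ k, x k (i k)‖ ∈
        { r : ℝ | ∃ x : ∀ k, EuclideanSpace ℂ (Fin (n k)),
          (∀ k, ‖x k‖ = 1) ∧ r = ‖∑ i, S i * ∏ k, x k (i k)‖ } :=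
      ⟨x, hx1, rfl⟩
    have hbdd : BddAbove { r : ℝ | ∃ x : ∀ k, EuclideanSpace ℂ (Fin (n k)),
        (∀ k, ‖x k‖ = 1) ∧ r = ‖∑ i, S i * ∏ k, x k (i k)‖ } := by
      refine ⟨∑ i, ‖S i‖, fun r hr => ?_⟩
      obtain ⟨z, hz, rfl⟩ := hr
      exact cBound S z hz
    exact le_trans (norm_nonneg _) (le_csSup hbdd hmem)
  · -- phiPos set nonempty
    refine ⟨specNorm (fun _ => (1:ℝ)) / frobNorm (fun _ => (1:ℝ)),
      fun _ => 1, ?_, fun _ => zero_le_one, rfl⟩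
    intro h
    exact one_ne_zero (congrFun h hidx)
  · -- subset
    rintro r ⟨S, hS0, hSnn, rfl⟩
    refine ⟨fun i => (S i : ℂ), ?_, ?_⟩
    · intro h
      apply hS0
      funext i
      have := congrFun h i
      simp only [Pi.zero_apply] at this ⊢
      exact_mod_cast this
    · obtain ⟨hA, _⟩ := main_eq hn S hSnn
      rw [hA]
      congr 1
      unfold cFrobNorm frobNorm
      congr 1
      apply Finset.sum_congr rfl
      intro i _
      rw [Complex.norm_real, Real.norm_eq_abs, sq_abs]
end
end
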